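/- arXiv:1612.04878 — 13 statements merged into one kernel-verified Lean document; each statement's English description precedes it below -/
import Mathlib

section
/- Let G be a Hausdorff topological group whose underlying space is extremally disconnected. Then G contains an open (and hence also closed) subgroup H such that h * h = 1 for every h ∈ H; that is, every extremally disconnected topological group contains an open Boolean subgroup. -/
/-!
The set `B` of solutions of `x * x = 1` is the fixed-point set of the inversion, a continuous
involution. In an extremally disconnected Hausdorff space the fixed points of a continuous
involution `f` form an open set: by Zorn's lemma take an open `M`, maximal with `M` disjoint
from `f ⁻¹' M`; maximality and the Hausdorff property put every non-fixed point in the closure of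
`M ∪ f ⁻¹' M`, so a fixed point adherent to the non-fixed points lies in the closures of both
`M` and `f ⁻¹' M`, which are disjoint because the space is extremally disconnected.
Hence `B` is a neighbourhood of `1`, so it contains `V * V` for an open `V ∋ 1`. The elements of
`V` are pairwise commuting involutions, so they generate a Boolean subgroup, which is open
because it contains `V`.
-/

open Set Function

section FixedPoints

variable {X : Type*} [TopologicalSpace X] {f : X → X}

theorem exists_isOpen_mem_disjoint_preimage [T2Space X] (hf : Continuous f) {x : X}
    (hx : f x ≠ x) : ∃ W : Set X, IsOpen W ∧ x ∈ W ∧ Disjoint W (f ⁻¹' W) := by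
  obtain ⟨U, V, hU, hV, hxU, hxV, hUV⟩ := t2_separation hx
  refine ⟨V ∩ f ⁻¹' U, hV.inter (hU.preimage hf), ⟨hxV, hxU⟩, ?_⟩
  exact disjoint_left.2 fun y hy hy' ↦ hUV.ne_of_mem hy.2 hy'.1 rfl

theorem exists_maximal_isOpen_disjoint_preimage (f : X → X) :
    ∃ M, Maximal (fun O : Set X ↦ IsOpen O ∧ Disjoint O (f ⁻¹' O)) M := by
  refine zorn_subset _ fun c hc hchain ↦ ⟨⋃₀ c, ⟨isOpen_sUnion fun O hO ↦ (hc hO).1, ?_⟩,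
    fun _ ↦ subset_sUnion_of_mem⟩
  rw [preimage_sUnion, disjoint_sUnion_left]
  refine fun O₁ hO₁ ↦ disjoint_iUnion₂_right.2 fun O₂ hO₂ ↦ ?_
  rcases hchain.total hO₁ hO₂ with h | h
  · exact (hc hO₂).2.mono_left h
  · exact (hc hO₁).2.mono_right (preimage_mono h)

theorem Maximal.subset_closure_union_preimage [T2Space X] (hf : Continuous f)
    (hinv : Involutive f) {M : Set X}
    (hM : Maximal (fun O : Set X ↦ IsOpen O ∧ Disjoint O (f ⁻¹' O)) M) :
    {x | f x ≠ x} ⊆ closure (M ∪ f ⁻¹' M) := by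
  intro x hx
  by_contra hxM
  obtain ⟨W, hW, hxW, hWW⟩ := exists_isOpen_mem_disjoint_preimage hf hx
  set W' := W \ closure (M ∪ f ⁻¹' M)
  have hW'M : Disjoint W' (f ⁻¹' M) :=
    disjoint_left.2 fun y hy hyM ↦ hy.2 (subset_closure (Or.inr hyM))
  have hMW' : Disjoint M (f ⁻¹' W') := hinv.preimage M ▸ hW'M.symm.preimage f
  have hW'W' : Disjoint W' (f ⁻¹' W') := hWW.mono sdiff_subset (preimage_mono sdiff_subset)
  have hunion : IsOpen (M ∪ W') ∧ Disjoint (M ∪ W') (f ⁻¹' (M ∪ W')) := by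
    refine ⟨hM.prop.1.union (hW.sdiff isClosed_closure), ?_⟩
    rw [preimage_union, disjoint_union_left, disjoint_union_right, disjoint_union_right]
    exact ⟨⟨hM.prop.2, hMW'⟩, hW'M, hW'W'⟩
  exact hxM (subset_closure (Or.inl (hM.le_of_ge hunion subset_union_left (Or.inr ⟨hxW, hxM⟩))))

theorem mem_closure_preimage_of_isFixedPt (hf : Continuous f) (hinv : Involutive f) {s : Set X}
    {x : X} (hx : IsFixedPt f x) (hxs : x ∈ closure s) : x ∈ closure (f ⁻¹' s) := by
  rw [← hinv.image_eq_preimage_symm, ← hx]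
  exact image_closure_subset_closure_image hf (mem_image_of_mem f hxs)

theorem isOpen_fixedPoints_of_involutive [T2Space X] [ExtremallyDisconnected X]
    (hf : Continuous f) (hinv : Involutive f) : IsOpen (fixedPoints f) := by
  obtain ⟨M, hM⟩ := exists_maximal_isOpen_disjoint_preimage f
  rw [← isClosed_compl_iff, ← closure_subset_iff_isClosed]
  intro x hx hfix
  have hxM : x ∈ closure M ∪ closure (f ⁻¹' M) := by
    rw [← closure_union]
    exact closure_minimal (hM.subset_closure_union_preimage hf hinv) isClosed_closure hx
  have hboth : x ∈ closure M ∧ x ∈ closure (f ⁻¹' M) := by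
    rcases hxM with h | h
    · exact ⟨h, mem_closure_preimage_of_isFixedPt hf hinv hfix h⟩
    · exact ⟨hinv.preimage M ▸ mem_closure_preimage_of_isFixedPt hf hinv hfix h, h⟩
  exact (ExtremallyDisconnected.disjoint_closure_of_disjoint_isOpen hM.prop.2 hM.prop.1
    (hM.prop.1.preimage hf)).ne_of_mem hboth.1 hboth.2 rfl

end FixedPoints

namespace Subgroup

variable {G : Type*} [Group G]

theorem inv_eq_self_of_mem_closure {s : Set G} (hcomm : ∀ x ∈ s, ∀ y ∈ s, x * y = y * x)
    (hs : ∀ x ∈ s, x⁻¹ = x) {g : G} (hg : g ∈ closure s) : g⁻¹ = g := by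
  have := isMulCommutative_closure hcomm
  induction hg using closure_induction with
  | mem x hx => exact hs x hx
  | one => exact inv_one
  | mul x y hx hy px py => rw [mul_inv_rev, px, py, setLike_mul_comm hy hx]
  | inv x _ px => rw [inv_inv, px]

end Subgroup

/-- Every Hausdorff extremally disconnected topological group contains an open
(and hence also closed) Boolean subgroup. -/
theorem stmt0 {G : Type*} [Group G] [TopologicalSpace G] [IsTopologicalGroup G]
    [T2Space G] [ExtremallyDisconnected G] :
    ∃ H : Subgroup G, IsOpen (H : Set G) ∧ IsClosed (H : Set G) ∧
      ∀ h ∈ H, h * h = 1 := by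
  have hB : fixedPoints (·⁻¹ : G → G) ∈ nhds 1 :=
    (isOpen_fixedPoints_of_involutive continuous_inv inv_involutive).mem_nhds inv_one
  obtain ⟨V, hV, hV1, hVV⟩ := exists_open_nhds_one_mul_subset hB
  have hVB : ∀ x ∈ V, ∀ y ∈ V, (x * y)⁻¹ = x * y :=
    fun x hx y hy ↦ hVV (mul_mem_mul hx hy)
  have hVinv : ∀ x ∈ V, x⁻¹ = x := fun x hx ↦ by simpa using hVB x hx 1 hV1
  have hVcomm : ∀ x ∈ V, ∀ y ∈ V, x * y = y * x := fun x hx y hy ↦ by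
    rw [← hVB x hx y hy, mul_inv_rev, hVinv x hx, hVinv y hy]
  have hopen : IsOpen (Subgroup.closure V : Set G) :=
    Subgroup.isOpen_of_mem_nhds _ (Filter.mem_of_superset (hV.mem_nhds hV1) Subgroup.subset_closure)
  refine ⟨Subgroup.closure V, hopen, Subgroup.isClosed_of_isOpen _ hopen, fun h hh ↦ ?_⟩
  exact mul_eq_one_iff_eq_inv.2 (Subgroup.inv_eq_self_of_mem_closure hVcomm hVinv hh).symm
end

section
/- Let G be a Hausdorff Boolean topological group that is hereditarily extremally disconnected, i.e., every subspace of G is extremally disconnected. Then every closed linearly independent subset S of G contains at most one point that is not isolated in the subspace S; equivalently, for any two distinct points a, b ∈ S, at least one of a and b is isolated in the subspace S. -/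
/-!
Suppose `a ≠ b` in `S` are both non-isolated, and let `T = S \ {a, b}`, so `a, b ∈ closure T`.
The translates `T + a` and `T + b` both accumulate at `a + a = b + b = 0`. Since `S` is closed,
`closure (T + b) ⊆ S + b`, and independence forbids `x + a = y + b` for `x ∈ T`, `y ∈ S`; so
`T + a` and `T + b` are separated. In a hereditarily extremally disconnected space separated sets
have disjoint closures, a contradiction.
-/

open Set

lemma add_ne_zero_of_independent {G : Type*} [AddCommGroup G] {S : Set G}
    (hind : ∀ t : Finset G, ↑t ⊆ S → t.Nonempty → ∑ x ∈ t, x ≠ 0)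
    {x y : G} (hx : x ∈ S) (hy : y ∈ S) (hxy : x ≠ y) : x + y ≠ 0 := by
  classical
  have h := hind {x, y} (by simp [insert_subset_iff, hx, hy]) (Finset.insert_nonempty _ _)
  rwa [Finset.sum_pair hxy] at h

/-- In a Boolean group `x + a = y + b` means `x + a + y + b = 0`, a relation among at most four
elements of `S`. -/
lemma add_ne_add_of_independent {G : Type*} [AddCommGroup G] (hbool : ∀ g : G, g + g = 0)
    {S : Set G} (hind : ∀ t : Finset G, ↑t ⊆ S → t.Nonempty → ∑ x ∈ t, x ≠ 0)
    {a b x y : G} (ha : a ∈ S) (hb : b ∈ S) (hx : x ∈ S) (hy : y ∈ S)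
    (hab : a ≠ b) (hxa : x ≠ a) (hxb : x ≠ b) : x + a ≠ y + b := by
  classical
  intro h
  have hsum : x + a + (y + b) = 0 := by rw [h, hbool]
  by_cases hyx : y = x
  · subst hyx
    exact hab (add_left_cancel h)
  by_cases hya : y = a
  · subst hya
    exact hxb (add_right_cancel (h.trans (add_comm _ _)))
  by_cases hyb : y = b
  · subst hyb
    exact add_ne_zero_of_independent hind hx ha hxa (by rw [h, hbool])
  refine hind {y, x, a, b} (by simp [insert_subset_iff, *]) (Finset.insert_nonempty _ _) ?_
  rw [Finset.sum_insert (by simp [*]), Finset.sum_insert (by simp [*]), Finset.sum_pair hab]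
  rw [← hsum]
  abel

lemma mem_closure_sdiff_sdiff_of_not_isolated {X : Type*} [TopologicalSpace X] [T1Space X]
    {S : Set X} {c d : X} (hc : c ∈ S) (hcd : c ≠ d)
    (h : ¬∃ U : Set X, IsOpen U ∧ U ∩ S = {c}) : c ∈ closure ((S \ {c}) \ {d}) := by
  rw [mem_closure_iff_nhdsWithin_neBot, hcd.nhdsWithin_sdiff_singleton,
    ← mem_closure_iff_nhdsWithin_neBot]
  by_contra hcl
  refine h ⟨(closure (S \ {c}))ᶜ, isClosed_closure.isOpen_compl, ?_⟩
  refine eq_singleton_iff_unique_mem.2 ⟨⟨hcl, hc⟩, fun z ⟨hz, hzS⟩ => ?_⟩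
  by_contra hzc
  exact hz (subset_closure ⟨hzS, hzc⟩)

lemma disjoint_closure_of_separated {X : Type*} [TopologicalSpace X]
    (hX : ∀ Y : Set X, ExtremallyDisconnected Y) {A B : Set X}
    (hAB : Disjoint A (closure B)) (hBA : Disjoint (closure A) B) :
    Disjoint (closure A) (closure B) := by
  refine disjoint_left.2 fun x hxA hxB => ?_
  -- In `Z = {x} ∪ A ∪ B` the sets `A` and `B` are relatively open, and both accumulate at `x`.
  set Z := insert x (A ∪ B)
  have := hX Z
  set U : Set Z := (↑) ⁻¹' (closure B)ᶜ
  set V : Set Z := (↑) ⁻¹' (closure A)ᶜ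
  have hUV : Disjoint U V := by
    refine disjoint_left.2 fun ⟨z, hz⟩ hzU hzV => ?_
    rcases hz with rfl | hz | hz
    · exact hzU hxB
    · exact hzV (subset_closure hz)
    · exact hzU (subset_closure hz)
  have hxU : (⟨x, mem_insert _ _⟩ : Z) ∈ closure U := by
    rw [closure_subtype]
    refine closure_mono ?_ hxA
    exact fun z hz => ⟨⟨z, Or.inr (Or.inl hz)⟩, disjoint_left.1 hAB hz, rfl⟩
  have hxV : (⟨x, mem_insert _ _⟩ : Z) ∈ closure V := by
    rw [closure_subtype]
    refine closure_mono ?_ hxB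
    exact fun z hz => ⟨⟨z, Or.inr (Or.inr hz)⟩, disjoint_right.1 hBA hz, rfl⟩
  exact disjoint_left.1 (ExtremallyDisconnected.disjoint_closure_of_disjoint_isOpen hUV
    (isClosed_closure.isOpen_compl.preimage continuous_subtype_val)
    (isClosed_closure.isOpen_compl.preimage continuous_subtype_val)) hxU hxV

lemma disjoint_image_add_right_closure_image_add_right {G : Type*} [AddCommGroup G]
    [TopologicalSpace G] [IsTopologicalAddGroup G] (hbool : ∀ g : G, g + g = 0)
    {S : Set G} (hScl : IsClosed S) (hind : ∀ t : Finset G, ↑t ⊆ S → t.Nonempty → ∑ x ∈ t, x ≠ 0)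
    {a b : G} (ha : a ∈ S) (hb : b ∈ S) (hab : a ≠ b) :
    Disjoint ((· + a) '' ((S \ {a}) \ {b})) (closure ((· + b) '' ((S \ {a}) \ {b}))) := by
  have hsub : closure ((· + b) '' ((S \ {a}) \ {b})) ⊆ (· + b) '' S :=
    closure_minimal (image_mono (sdiff_subset.trans sdiff_subset))
      ((Homeomorph.addRight b).isClosedMap S hScl)
  refine disjoint_left.2 ?_
  rintro - ⟨x, ⟨⟨hxS, hxa⟩, hxb⟩, rfl⟩ hmem
  obtain ⟨y, hy, hyx⟩ := hsub hmem
  exact add_ne_add_of_independent hbool hind ha hb hxS hy hab hxa hxb hyx.symm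

/-- In a hereditarily extremally disconnected Hausdorff Boolean topological group,
every closed linearly independent subset contains at most one point that is not
isolated in it: for any two distinct points of the set, at least one is isolated. -/
theorem stmt2 {G : Type*} [AddCommGroup G] [TopologicalSpace G] [IsTopologicalAddGroup G]
    [T2Space G] (hbool : ∀ g : G, g + g = 0)
    (hhed : ∀ Y : Set G, ExtremallyDisconnected Y)
    (S : Set G) (hScl : IsClosed S)
    (hind : ∀ t : Finset G, ↑t ⊆ S → t.Nonempty → ∑ x ∈ t, x ≠ 0) :
    ∀ a ∈ S, ∀ b ∈ S, a ≠ b →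
      (∃ U : Set G, IsOpen U ∧ U ∩ S = {a}) ∨ (∃ U : Set G, IsOpen U ∧ U ∩ S = {b}) := by
  intro a ha b hb hab
  refine or_iff_not_imp_left.2 fun ha_iso => by_contra fun hb_iso => ?_
  have haT := mem_closure_sdiff_sdiff_of_not_isolated ha hab ha_iso
  have hbT := mem_closure_sdiff_sdiff_of_not_isolated hb hab.symm hb_iso
  rw [sdiff_sdiff_comm] at hbT
  have h0a : (0 : G) ∈ closure ((· + a) '' ((S \ {a}) \ {b})) := hbool a ▸
    map_mem_closure (f := (· + a)) (continuous_add_const a) haT (mapsTo_image _ _)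
  have h0b : (0 : G) ∈ closure ((· + b) '' ((S \ {a}) \ {b})) := hbool b ▸
    map_mem_closure (f := (· + b)) (continuous_add_const b) hbT (mapsTo_image _ _)
  have hsep := disjoint_image_add_right_closure_image_add_right hbool hScl hind ha hb hab
  have hsep' := disjoint_image_add_right_closure_image_add_right hbool hScl hind hb ha hab.symm
  rw [sdiff_sdiff_comm] at hsep'
  exact disjoint_left.1 (disjoint_closure_of_separated hhed hsep hsep'.symm) h0a h0b
end

section
/- Let G be a Hausdorff Boolean topological group whose underlying space is extremally disconnected. Then every countable closed linearly independent subset S of G contains at most one point that is not isolated in the subspace S; equivalently, for any two distinct points a, b ∈ S, at least one of a and b is isolated in the subspace S. -/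
/-!
Suppose neither `a` nor `b` is isolated in `S`, so both lie in the closure of `A = S \ {a, b}`,
and put `c = a + b`. Independence gives `S ∩ (S + c) ⊆ {a, b}`; since `S` is closed, the countable
sets `A` and `A + c` are each disjoint from the closure of the other. In a regular space such
countable sets have disjoint open neighbourhoods, and in an extremally disconnected space disjoint
open sets have disjoint closures. But `a` lies in the closure of `A` and, as `b = a + c`, also in
the closure of `A + c`.
-/

open Set Topology

theorem Set.Countable.hasSeparatingCover {X : Type*} [TopologicalSpace X] [RegularSpace X]
    {s t : Set X} (hs : s.Countable) (hst : Disjoint s (closure t)) : HasSeparatingCover s t := by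
  rcases s.eq_empty_or_nonempty with rfl | hne
  · exact hasSeparatingCover_empty_left t
  obtain ⟨f, rfl⟩ := hs.exists_eq_range hne
  have (n : ℕ) : ∃ u, IsOpen u ∧ f n ∈ u ∧ Disjoint (closure u) t := by
    have hfn : f n ∉ closure t := disjoint_left.1 hst (mem_range_self n)
    obtain ⟨u, ⟨hfu, hu⟩, hut⟩ :=
      (hasBasis_opens_closure (f n)).mem_iff.1 (isClosed_closure.compl_mem_nhds hfn)
    exact ⟨u, hu, hfu, (subset_compl_iff_disjoint_right.1 hut).mono_right subset_closure⟩
  choose u hu_open hu_mem hu_disj using this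
  exact ⟨u, range_subset_iff.2 fun n ↦ mem_iUnion_of_mem n (hu_mem n),
    fun n ↦ ⟨hu_open n, hu_disj n⟩⟩

theorem ExtremallyDisconnected.disjoint_closure_of_countable {X : Type*} [TopologicalSpace X]
    [RegularSpace X] [ExtremallyDisconnected X] {s t : Set X} (hs : s.Countable)
    (ht : t.Countable) (hst : Disjoint s (closure t)) (hts : Disjoint t (closure s)) :
    Disjoint (closure s) (closure t) := by
  obtain ⟨U, V, hU, hV, hsU, htV, hUV⟩ := hasSeparatingCovers_iff_separatedNhds.1
    ⟨hs.hasSeparatingCover hst, ht.hasSeparatingCover hts⟩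
  exact (disjoint_closure_of_disjoint_isOpen hUV hU hV).mono
    (closure_mono hsU) (closure_mono htV)

theorem exists_isOpen_inter_eq_singleton_of_notMem_closure {X : Type*} [TopologicalSpace X]
    [T1Space X] {S : Set X} {a b : X} (ha : a ∈ S) (hab : a ≠ b)
    (h : a ∉ closure (S \ {a, b})) : ∃ U, IsOpen U ∧ U ∩ S = {a} := by
  refine ⟨(closure (S \ {a, b}))ᶜ \ {b},
    isClosed_closure.isOpen_compl.sdiff isClosed_singleton, ?_⟩
  refine Subset.antisymm (fun x ⟨⟨hxcl, hxb⟩, hxS⟩ ↦ ?_) ?_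
  · by_contra hxa
    exact hxcl (subset_closure ⟨hxS, by simp_all⟩)
  · rintro x rfl
    exact ⟨⟨h, hab⟩, ha⟩

section BooleanGroup

variable {G : Type*} [AddCommGroup G]

theorem eq_or_eq_of_mem_of_add_mem (hG : ∀ g : G, g + g = 0) {S : Set G}
    (hS : ∀ t : Finset G, ↑t ⊆ S → t.Nonempty → ∑ x ∈ t, x ≠ 0) {a b x : G}
    (ha : a ∈ S) (hb : b ∈ S) (hab : a ≠ b) (hx : x ∈ S) (hxab : x + (a + b) ∈ S) :
    x = a ∨ x = b := by
  classical
  have eq_of_add_eq_zero {u v : G} (h : u + v = 0) : u = v :=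
    (eq_neg_of_add_eq_zero_left h).trans (neg_eq_of_add_eq_zero_right (hG v))
  by_contra! hx'
  obtain ⟨hxa, hxb⟩ := hx'
  set y := x + (a + b)
  have hxy : x ≠ y := fun h ↦ hab (eq_of_add_eq_zero (by linear_combination (norm := module) -h))
  have hya : y ≠ a := fun h ↦ hxb (eq_of_add_eq_zero (by linear_combination (norm := module) h))
  have hyb : y ≠ b := fun h ↦ hxa (eq_of_add_eq_zero (by linear_combination (norm := module) h))
  refine hS {x, y, a, b} ?_ (Finset.insert_nonempty _ _) ?_
  · simp [insert_subset_iff, *]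
  · rw [Finset.sum_insert (by simp [*]), Finset.sum_insert (by simp [*]), Finset.sum_pair hab]
    linear_combination (norm := module) hG x + hG (a + b)

theorem notMem_closure_sdiff_pair_or [TopologicalSpace G] [IsTopologicalAddGroup G]
    [ExtremallyDisconnected G] (hG : ∀ g : G, g + g = 0) {S : Set G} (hS_cnt : S.Countable)
    (hS_cl : IsClosed S) (hS : ∀ t : Finset G, ↑t ⊆ S → t.Nonempty → ∑ x ∈ t, x ≠ 0)
    {a b : G} (ha : a ∈ S) (hb : b ∈ S) (hab : a ≠ b) :
    a ∉ closure (S \ {a, b}) ∨ b ∉ closure (S \ {a, b}) := by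
  set A := S \ {a, b}
  set c := a + b
  have hA_cl : closure A ⊆ S := closure_minimal sdiff_subset hS_cl
  have shift_notMem : ∀ y ∈ A, y + c ∉ closure A := fun y hy hyc ↦
    hy.2 (eq_or_eq_of_mem_of_add_mem hG hS ha hb hab hy.1 (hA_cl hyc))
  set B := (· + c) ⁻¹' A
  have hB_cl : closure B = (· + c) ⁻¹' closure A :=
    ((Homeomorph.addRight c).preimage_closure A).symm
  have hdisj : Disjoint (closure A) (closure B) := by
    refine ExtremallyDisconnected.disjoint_closure_of_countable (hS_cnt.mono sdiff_subset)
      ((hS_cnt.mono sdiff_subset).preimage (add_left_injective c)) ?_ ?_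
    · rw [hB_cl]
      exact disjoint_left.2 shift_notMem
    · refine disjoint_left.2 fun x hx hxA ↦ shift_notMem (x + c) hx ?_
      rwa [add_assoc, hG, add_zero]
  by_contra! h
  refine disjoint_left.1 hdisj h.1 ?_
  rw [hB_cl, mem_preimage, ← add_assoc, hG, zero_add]
  exact h.2

end BooleanGroup

/-- In an extremally disconnected Hausdorff Boolean topological group, every
countable closed linearly independent subset contains at most one point that is
not isolated in it: for any two distinct points of the set, at least one is isolated. -/
theorem stmt3 {G : Type*} [AddCommGroup G] [TopologicalSpace G] [IsTopologicalAddGroup G]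
    [T2Space G] [ExtremallyDisconnected G] (hbool : ∀ g : G, g + g = 0)
    (S : Set G) (hScnt : S.Countable) (hScl : IsClosed S)
    (hind : ∀ t : Finset G, ↑t ⊆ S → t.Nonempty → ∑ x ∈ t, x ≠ 0) :
    ∀ a ∈ S, ∀ b ∈ S, a ≠ b →
      (∃ U : Set G, IsOpen U ∧ U ∩ S = {a}) ∨ (∃ U : Set G, IsOpen U ∧ U ∩ S = {b}) := by
  intro a ha b hb hab
  refine (notMem_closure_sdiff_pair_or hbool hScnt hScl hind ha hb hab).imp
    (exists_isOpen_inter_eq_singleton_of_notMem_closure ha hab) fun h ↦ ?_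
  rw [pair_comm] at h
  exact exists_isOpen_inter_eq_singleton_of_notMem_closure hb hab.symm h
end

section
/- Let F be a free filter on ℕ. Then F is selective if and only if the Mathias topology τ_M(F) and the Laver topology τ_L(F) on Finset ℕ coincide (a set is τ_M(F)-open if and only if it is τ_L(F)-open). -/
/-- A free filter `F` on `ℕ` is selective if every sequence of elements of `F`
admits a diagonal intersection in `F`. -/
def Selective (F : Filter ℕ) : Prop :=
  ∀ A : ℕ → Set ℕ, (∀ n, A n ∈ F) → ∃ D ∈ F, ∀ i ∈ D, ∀ j ∈ D, i < j → j ∈ A i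

/-- A set `U ⊆ Finset ℕ` is open in the Mathias topology determined by a filter `F`
on `ℕ` if every `t ∈ U` has a "Mathias neighborhood" `[t, A] ⊆ U` with `A ∈ F`. -/
def IsMathiasOpen (F : Filter ℕ) (U : Set (Finset ℕ)) : Prop :=
  ∀ t ∈ U, ∃ A ∈ F, (∀ a ∈ A, ∀ x ∈ t, x < a) ∧
    ∀ s : Finset ℕ, ↑s ⊆ A → t ∪ s ∈ U

/-- A set `U ⊆ Finset ℕ` is open in the Laver topology determined by a filter `F`
on `ℕ` if for every `t ∈ U` the set of `n` exceeding all elements of `t` with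
`t ∪ {n} ∈ U` belongs to `F`. -/
def IsLaverOpen (F : Filter ℕ) (U : Set (Finset ℕ)) : Prop :=
  ∀ t ∈ U, {n : ℕ | (∀ x ∈ t, x < n) ∧ t ∪ {n} ∈ U} ∈ F

theorem cofinite_above (F : Filter ℕ) (hF : F ≤ Filter.cofinite) (t : Finset ℕ) :
    {n : ℕ | ∀ x ∈ t, x < n} ∈ F := by
  apply hF
  rw [Filter.mem_cofinite]
  apply Set.Finite.subset (Set.finite_Iic (t.sup id))
  intro n hn
  simp only [Set.mem_compl_iff, Set.mem_setOf_eq] at hn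
  push_neg at hn
  obtain ⟨x, hx, hnx⟩ := hn
  exact Set.mem_Iic.mpr (hnx.trans (Finset.le_sup (f := id) hx))

/-- The Mathias topology on `Finset ℕ` determined by a free filter `F` on `ℕ`;
it is the topology of the free Boolean linear topological group on the almost
discrete space associated with `F`. -/
def mathiasTop (F : Filter ℕ) (hF : F ≤ Filter.cofinite) : TopologicalSpace (Finset ℕ) where
  IsOpen := IsMathiasOpen F
  isOpen_univ := by
    intro t _
    exact ⟨{n | ∀ x ∈ t, x < n}, cofinite_above F hF t, fun a ha => ha, fun s _ => trivial⟩
  isOpen_inter := by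
    intro U V hU hV t ht
    obtain ⟨A, hA, hA1, hA2⟩ := hU t ht.1
    obtain ⟨B, hB, hB1, hB2⟩ := hV t ht.2
    exact ⟨A ∩ B, Filter.inter_mem hA hB, fun a ha => hA1 a ha.1,
      fun s hs => ⟨hA2 s (hs.trans Set.inter_subset_left),
        hB2 s (hs.trans Set.inter_subset_right)⟩⟩
  isOpen_sUnion := by
    intro S hS t ht
    obtain ⟨U, hU, htU⟩ := ht
    obtain ⟨A, hA, hA1, hA2⟩ := hS U hU t htU
    exact ⟨A, hA, hA1, fun s hs => ⟨U, hU, hA2 s hs⟩⟩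

/-- The Laver topology on `Finset ℕ` determined by a free filter `F` on `ℕ`. -/
def laverTop (F : Filter ℕ) (hF : F ≤ Filter.cofinite) : TopologicalSpace (Finset ℕ) where
  IsOpen := IsLaverOpen F
  isOpen_univ := by
    intro t _
    exact Filter.mem_of_superset (cofinite_above F hF t) fun n hn => ⟨hn, trivial⟩
  isOpen_inter := by
    intro U V hU hV t ht
    exact Filter.mem_of_superset (Filter.inter_mem (hU t ht.1) (hV t ht.2))
      fun n hn => ⟨hn.1.1, hn.1.2, hn.2.2⟩
  isOpen_sUnion := by
    intro S hS t ht
    obtain ⟨U, hU, htU⟩ := ht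
    exact Filter.mem_of_superset (hS U hU t htU) fun n hn => ⟨hn.1, U, hU, hn.2⟩

/-!
Mathias-open sets are always Laver-open, since a Mathias neighbourhood `[t, A]` contains
`t ∪ {n}` for every `n ∈ A`. If `F` is selective and `U` is Laver-open at `t`, choose for each
`n` a set `A n ∈ F` of admissible one-point extensions of `t ∪ s` for all `s ⊆ {0, …, n}`; a
diagonal intersection `D` of the `A n` then lets every `s ⊆ D` be built up one maximum at a time
inside `U`. Conversely, for `A : ℕ → Set ℕ` with all `A n ∈ F` the finite sets that are
`A`-diagonal form a Laver-open set; a Mathias neighbourhood `[∅, D]` inside it is exactly a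
diagonal intersection of the `A n`.
-/

theorem IsMathiasOpen.isLaverOpen {F : Filter ℕ} {U : Set (Finset ℕ)} (h : IsMathiasOpen F U) :
    IsLaverOpen F U := by
  intro t ht
  obtain ⟨A, hA, hAt, hAU⟩ := h t ht
  filter_upwards [hA] with n hn
  exact ⟨hAt n hn, hAU {n} (by simpa using hn)⟩

theorem IsLaverOpen.eventually_union_singleton_mem {F : Filter ℕ} {U : Set (Finset ℕ)}
    (h : IsLaverOpen F U) (t : Finset ℕ) : {n : ℕ | t ∈ U → t ∪ {n} ∈ U} ∈ F := by
  by_cases ht : t ∈ U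
  · exact Filter.mem_of_superset (h t ht) fun n hn _ => hn.2
  · exact Filter.univ_mem' fun n h => absurd h ht

theorem union_mem_of_forall_union_insert_mem {U : Set (Finset ℕ)} {t : Finset ℕ} {E : Set ℕ}
    (ht : t ∈ U)
    (hstep : ∀ s : Finset ℕ, ↑s ⊆ E → ∀ a ∈ E, (∀ x ∈ s, x < a) → t ∪ s ∈ U →
      t ∪ insert a s ∈ U) :
    ∀ s : Finset ℕ, ↑s ⊆ E → t ∪ s ∈ U := by
  intro s hs
  induction s using Finset.induction_on_max with
  | empty => simpa using ht
  | insert a s hlt ih =>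
    have hsE : ↑s ⊆ E := fun x hx => hs (by simp [Finset.mem_coe.mp hx])
    exact hstep s hsE a (hs (by simp)) hlt (ih hsE)

theorem IsLaverOpen.isMathiasOpen_of_selective {F : Filter ℕ} {U : Set (Finset ℕ)}
    (hfree : F ≤ Filter.cofinite) (hsel : Selective F) (h : IsLaverOpen F U) :
    IsMathiasOpen F U := by
  intro t ht
  set B : Finset ℕ → Set ℕ := fun r => {n : ℕ | r ∈ U → r ∪ {n} ∈ U}
  have hB : ∀ r, B r ∈ F := h.eventually_union_singleton_mem
  obtain ⟨D, hD, hDdiag⟩ :=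
    hsel (fun i => ⋂ s ∈ (Finset.range (i + 1)).powerset, B (t ∪ s))
      fun i => (Filter.biInter_finset_mem _).mpr fun s _ => hB _
  refine ⟨D ∩ B t ∩ {n | ∀ x ∈ t, x < n},
    Filter.inter_mem (Filter.inter_mem hD (hB t)) (cofinite_above F hfree t),
    fun a ha => ha.2, union_mem_of_forall_union_insert_mem ht ?_⟩
  rintro s hs a ⟨⟨haD, hat⟩, -⟩ hsa hts
  rw [Finset.insert_eq, Finset.union_comm {a}, ← Finset.union_assoc]
  rcases s.eq_empty_or_nonempty with rfl | hne
  · simpa using hat ht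
  · -- `a` is diagonal over `i = max s`, and `s ⊆ {0, …, i}`
    have hiD : s.max' hne ∈ D := (hs (s.max'_mem hne)).1.1
    have hsi : s ∈ (Finset.range (s.max' hne + 1)).powerset :=
      Finset.mem_powerset.mpr fun x hx => Finset.mem_range.mpr (Nat.lt_succ_of_le (s.le_max' x hx))
    exact Set.mem_iInter₂.mp (hDdiag _ hiD a haD (hsa _ (s.max'_mem hne))) s hsi hts

def diagonalFinsets (A : ℕ → Set ℕ) : Set (Finset ℕ) :=
  {s | ∀ i ∈ s, ∀ j ∈ s, i < j → j ∈ A i}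

theorem insert_mem_diagonalFinsets {A : ℕ → Set ℕ} {s : Finset ℕ} {n : ℕ}
    (hs : s ∈ diagonalFinsets A) (hsn : ∀ x ∈ s, x < n) (hn : ∀ i ∈ s, n ∈ A i) :
    insert n s ∈ diagonalFinsets A := by
  intro i hi j hj hij
  rcases Finset.mem_insert.mp hi with hin | hi <;> rcases Finset.mem_insert.mp hj with hjn | hj
  · exact absurd hij (by omega)
  · exact absurd (hsn j hj) (by omega)
  · exact hjn ▸ hn i hi
  · exact hs i hi j hj hij

theorem isLaverOpen_diagonalFinsets {F : Filter ℕ} (hfree : F ≤ Filter.cofinite)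
    {A : ℕ → Set ℕ} (hA : ∀ n, A n ∈ F) : IsLaverOpen F (diagonalFinsets A) := by
  intro t ht
  filter_upwards [cofinite_above F hfree t, (Filter.biInter_finset_mem t).mpr fun i _ => hA i]
    with n htn hnA
  refine ⟨htn, ?_⟩
  rw [Finset.union_comm, ← Finset.insert_eq]
  exact insert_mem_diagonalFinsets ht htn fun i hi => Set.mem_iInter₂.mp hnA i hi

theorem exists_diagonal_of_isMathiasOpen_diagonalFinsets {F : Filter ℕ} {A : ℕ → Set ℕ}
    (h : IsMathiasOpen F (diagonalFinsets A)) :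
    ∃ D ∈ F, ∀ i ∈ D, ∀ j ∈ D, i < j → j ∈ A i := by
  obtain ⟨D, hD, -, hDU⟩ := h ∅ (by simp [diagonalFinsets])
  refine ⟨D, hD, fun i hi j hj hij => ?_⟩
  have hij_mem : ({i, j} : Finset ℕ) ∈ diagonalFinsets A := by
    simpa using hDU {i, j} (by simp [Set.insert_subset_iff, hi, hj])
  exact hij_mem i (by simp) j (by simp) hij

theorem stmt5_general (F : Filter ℕ)
    (hfree : F ≤ Filter.cofinite) :
    Selective F ↔
      ∀ U : Set (Finset ℕ),
        (mathiasTop F hfree).IsOpen U ↔ (laverTop F hfree).IsOpen U := by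
  constructor
  · intro hsel U
    exact ⟨IsMathiasOpen.isLaverOpen, IsLaverOpen.isMathiasOpen_of_selective hfree hsel⟩
  · intro htop A hA
    exact exists_diagonal_of_isMathiasOpen_diagonalFinsets
      ((htop _).mpr (isLaverOpen_diagonalFinsets hfree hA))

/-- A free filter `F` on `ℕ` is selective if and only if the Mathias topology and
the Laver topology on `Finset ℕ` determined by `F` coincide: a set is
`τ_M(F)`-open iff it is `τ_L(F)`-open. -/
theorem stmt5 (F : Filter ℕ) (hproper : (∅ : Set ℕ) ∉ F)
    (hfree : F ≤ Filter.cofinite) :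
    Selective F ↔
      ∀ U : Set (Finset ℕ),
        (mathiasTop F hfree).IsOpen U ↔ (laverTop F hfree).IsOpen U :=
  stmt5_general F hfree
end

section
/- Let F be a free filter on ℕ. Then F is selective if and only if the Laver topology τ_L(F) is a group topology on the Boolean group (Finset ℕ, △), i.e., if and only if the map (s, t) ↦ s △ t is jointly continuous with respect to τ_L(F) (inversion is the identity map, so this makes (Finset ℕ, △, τ_L(F)) a topological group). -/
/-- A free filter `F` on `ℕ` is selective if and only if the Laver topology
`τ_L(F)` is a group topology on the Boolean group `(Finset ℕ, △)`, i.e.,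
symmetric difference is jointly continuous with respect to `τ_L(F)`. -/
theorem stmt6 (F : Filter ℕ) (hproper : (∅ : Set ℕ) ∉ F)
    (hfree : F ≤ Filter.cofinite) :
    Selective F ↔
      @Continuous (Finset ℕ × Finset ℕ) (Finset ℕ)
        (@instTopologicalSpaceProd _ _ (laverTop F hfree) (laverTop F hfree))
        (laverTop F hfree) (fun p => symmDiff p.1 p.2) := by
  classical
  letI : TopologicalSpace (Finset ℕ) := laverTop F hfree
  constructor
  · -- Selective → continuous
    intro hsel
    rw [continuous_def]
    intro U hUopen
    have hU : IsLaverOpen F U := hUopen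
    rw [isOpen_prod_iff]
    intro s t hst
    have hrU : symmDiff s t ∈ U := hst
    set r := symmDiff s t with hr
    -- the family of "successor" sets of U
    set Aset : Finset ℕ → Set ℕ := fun u =>
      if u ∈ U then {n | (∀ x ∈ u, x < n) ∧ u ∪ {n} ∈ U} else Set.univ with hAsetdef
    have hAmem : ∀ u, Aset u ∈ F := by
      intro u
      by_cases h : u ∈ U
      · simpa [hAsetdef, h] using hU u h
      · simp [hAsetdef, h]
    have hAspec : ∀ u ∈ U, ∀ n ∈ Aset u, (∀ x ∈ u, x < n) ∧ u ∪ {n} ∈ U := by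
      intro u hu n hn
      simpa [hAsetdef, hu] using hn
    set B : ℕ → Set ℕ := fun n => ⋂ u ∈ (Finset.range (n+1)).powerset, Aset u with hBdef
    have hBmem : ∀ n, B n ∈ F := by
      intro n
      exact (Filter.biInter_finset_mem _).mpr fun u _ => hAmem u
    have hBspec : ∀ n, ∀ x ∈ B n, ∀ u : Finset ℕ, u ⊆ Finset.range (n+1) → x ∈ Aset u := by
      intro n x hx u hu
      have := Set.mem_iInter₂.mp hx u
      exact this (Finset.mem_powerset.mpr hu)
    obtain ⟨D₀, hD₀F, hD₀⟩ := hsel B hBmem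
    set m := (s ∪ t).sup id with hm
    set D : Set ℕ := D₀ ∩ B m ∩ {n | ∀ x ∈ s ∪ t, x < n} with hDdef
    have hDmem : D ∈ F :=
      Filter.inter_mem (Filter.inter_mem hD₀F (hBmem m)) (cofinite_above F hfree (s ∪ t))
    have hrsub : ∀ x ∈ r, x ∈ s ∪ t := by
      intro x hx
      rcases Finset.mem_symmDiff.mp hx with ⟨h1, _⟩ | ⟨h1, _⟩
      · exact Finset.mem_union_left _ h1
      · exact Finset.mem_union_right _ h1
    have claim : ∀ N, ∀ e : Finset ℕ, e.card = N → ↑e ⊆ D → r ∪ e ∈ U := by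
      intro N
      induction N with
      | zero =>
        intro e he _
        rw [Finset.card_eq_zero] at he
        simpa [he] using hrU
      | succ n ih =>
        intro e he hsub
        have hne : e.Nonempty := by rw [← Finset.card_pos, he]; omega
        set j := e.max' hne with hj
        have hjmem : j ∈ e := e.max'_mem hne
        set e' := e.erase j with he'
        have hcard : e'.card = n := by
          rw [he', Finset.card_erase_of_mem hjmem, he]
          omega
        have hsub' : ↑e' ⊆ D := fun x hx =>
          hsub (Finset.mem_coe.mpr (Finset.mem_of_mem_erase (Finset.mem_coe.mp hx)))
        have hre' : r ∪ e' ∈ U := ih e' hcard hsub'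
        have hjD : j ∈ D := hsub (Finset.mem_coe.mpr hjmem)
        have hjA : j ∈ Aset (r ∪ e') := by
          rcases e'.eq_empty_or_nonempty with hE | hne'
          · -- e' empty : use j ∈ B m
            have hjB : j ∈ B m := hjD.1.2
            have hrsubR : r ∪ e' ⊆ Finset.range (m+1) := by
              rw [hE, Finset.union_empty]
              intro x hx
              rw [Finset.mem_range]
              have : x ≤ m := Finset.le_sup (f := id) (hrsub x hx)
              omega
            exact hBspec m j hjB _ hrsubR
          · set i := e'.max' hne' with hi
            have himem' : i ∈ e' := e'.max'_mem hne'
            have himem : i ∈ e := Finset.mem_of_mem_erase himem'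
            have hiD : i ∈ D := hsub (Finset.mem_coe.mpr himem)
            have hij : i < j := by
              have hle : i ≤ j := Finset.le_max' e i himem
              have hne2 : i ≠ j := Finset.ne_of_mem_erase himem'
              omega
            have hjB : j ∈ B i := hD₀ i hiD.1.1 j hjD.1.1 hij
            have hrsubR : r ∪ e' ⊆ Finset.range (i+1) := by
              intro x hx
              rw [Finset.mem_range]
              rcases Finset.mem_union.mp hx with hx | hx
              · have : x < i := hiD.2 x (hrsub x hx)
                omega
              · have : x ≤ i := Finset.le_max' e' x hx
                omega
            exact hBspec i j hjB _ hrsubR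
        obtain ⟨hlt, hmemU⟩ := hAspec (r ∪ e') hre' j hjA
        have heq : r ∪ e = (r ∪ e') ∪ {j} := by
          have : e = insert j e' := (Finset.insert_erase hjmem).symm
          rw [this]
          ext x
          simp only [Finset.mem_union, Finset.mem_insert, Finset.mem_singleton]
          tauto
        rw [heq]
        exact hmemU
    -- the Mathias cube neighborhoods
    set V : Set (Finset ℕ) := {v | ∃ e : Finset ℕ, ↑e ⊆ D ∧ v = s ∪ e} with hVdef
    set W : Set (Finset ℕ) := {w | ∃ e : Finset ℕ, ↑e ⊆ D ∧ w = t ∪ e} with hWdef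
    have cubeOpen : ∀ (a : Finset ℕ),
        IsLaverOpen F {v | ∃ e : Finset ℕ, ↑e ⊆ D ∧ v = a ∪ e} := by
      intro a v hv
      obtain ⟨e, heD, rfl⟩ := hv
      apply Filter.mem_of_superset
        (Filter.inter_mem hDmem (cofinite_above F hfree (a ∪ e)))
      rintro n ⟨hnD, hn⟩
      refine ⟨hn, e ∪ {n}, ?_, by rw [Finset.union_assoc]⟩
      intro x hx
      rcases Finset.mem_union.mp (Finset.mem_coe.mp hx) with hx | hx
      · exact heD (Finset.mem_coe.mpr hx)
      · rw [Finset.mem_singleton] at hx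
        subst hx; exact hnD
    refine ⟨V, W, cubeOpen s, cubeOpen t, ⟨∅, by simp⟩, ⟨∅, by simp⟩, ?_⟩
    rintro ⟨v, w⟩ ⟨⟨e, heD, rfl⟩, ⟨e', he'D, rfl⟩⟩
    show symmDiff (s ∪ e) (t ∪ e') ∈ U
    have hDhigh : ∀ x ∈ D, x ∉ s ∧ x ∉ t := by
      intro x hx
      constructor
      · intro hxs
        exact lt_irrefl x (hx.2 x (Finset.mem_union_left _ hxs))
      · intro hxt
        exact lt_irrefl x (hx.2 x (Finset.mem_union_right _ hxt))
    have key : symmDiff (s ∪ e) (t ∪ e') = r ∪ (symmDiff e e') := by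
      ext x
      have h1 : x ∈ e → x ∉ s ∧ x ∉ t := fun hx => hDhigh x (heD (Finset.mem_coe.mpr hx))
      have h2 : x ∈ e' → x ∉ s ∧ x ∉ t := fun hx => hDhigh x (he'D (Finset.mem_coe.mpr hx))
      simp only [hr, Finset.mem_symmDiff, Finset.mem_union]
      tauto
    rw [key]
    apply claim (symmDiff e e').card _ rfl
    intro x hx
    rcases Finset.mem_symmDiff.mp (Finset.mem_coe.mp hx) with ⟨h1, _⟩ | ⟨h1, _⟩
    · exact heD (Finset.mem_coe.mpr h1)
    · exact he'D (Finset.mem_coe.mpr h1)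
  · -- continuous → Selective
    intro hcont A hA
    set U : Set (Finset ℕ) := {u | ∀ i ∈ u, ∀ j ∈ u, i < j → j ∈ A i} with hUdef
    have hUopen : IsLaverOpen F U := by
      intro u hu
      apply Filter.mem_of_superset
        (Filter.inter_mem (cofinite_above F hfree u)
          ((Filter.biInter_finset_mem u).mpr fun i _ => hA i))
      rintro n ⟨hn1, hn2⟩
      rw [Set.mem_iInter₂] at hn2
      refine ⟨hn1, ?_⟩
      intro a ha b hb hab
      rcases Finset.mem_union.mp ha with ha' | ha'
      · rcases Finset.mem_union.mp hb with hb' | hb'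
        · exact hu a ha' b hb' hab
        · rw [Finset.mem_singleton] at hb'
          rw [hb']
          exact hn2 a ha'
      · rw [Finset.mem_singleton] at ha'
        rcases Finset.mem_union.mp hb with hb' | hb'
        · have := hn1 b hb'
          omega
        · rw [Finset.mem_singleton] at hb'
          omega
    have hOpen : IsOpen ((fun p : Finset ℕ × Finset ℕ => symmDiff p.1 p.2) ⁻¹' U) :=
      hcont.isOpen_preimage U hUopen
    have hmem : ((∅ : Finset ℕ), (∅ : Finset ℕ)) ∈
        (fun p : Finset ℕ × Finset ℕ => symmDiff p.1 p.2) ⁻¹' U := by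
      show symmDiff (∅ : Finset ℕ) ∅ ∈ U
      simp [hUdef]
    obtain ⟨V, W, hVopen, hWopen, hV0, hW0, hsub⟩ :=
      (isOpen_prod_iff.mp hOpen) ∅ ∅ hmem
    have hVL : IsLaverOpen F V := hVopen
    have hWL : IsLaverOpen F W := hWopen
    set DV := {n : ℕ | (∀ x ∈ (∅ : Finset ℕ), x < n) ∧ (∅ : Finset ℕ) ∪ {n} ∈ V} with hDV
    set DW := {n : ℕ | (∀ x ∈ (∅ : Finset ℕ), x < n) ∧ (∅ : Finset ℕ) ∪ {n} ∈ W} with hDW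
    refine ⟨DV ∩ DW, Filter.inter_mem (hVL ∅ hV0) (hWL ∅ hW0), ?_⟩
    intro i hi j hj hij
    have hiV : ({i} : Finset ℕ) ∈ V := by
      have := hi.1.2
      simpa using this
    have hjW : ({j} : Finset ℕ) ∈ W := by
      have := hj.2.2
      simpa using this
    have hU2 : symmDiff ({i} : Finset ℕ) {j} ∈ U :=
      hsub (Set.mk_mem_prod hiV hjW)
    have hine : i ≠ j := by omega
    have hiM : i ∈ symmDiff ({i} : Finset ℕ) {j} := by
      rw [Finset.mem_symmDiff]
      left
      simp [hine]
    have hjM : j ∈ symmDiff ({i} : Finset ℕ) {j} := by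
      rw [Finset.mem_symmDiff]
      right
      simp [Ne.symm hine]
    exact hU2 i hiM j hjM hij
end

section
/- Let F be a free filter on ℕ. (a) For every g ∈ Finset ℕ the translation t ↦ g △ t is a homeomorphism of (Finset ℕ, τ_L(F)), and every τ_L(F)-open set U containing ∅ satisfies {n ∈ ℕ : {n} ∈ U} ∈ F. (b) Conversely, if τ is any topology on Finset ℕ such that for every g ∈ Finset ℕ the translation t ↦ g △ t is τ-continuous and every τ-open set U containing ∅ satisfies {n ∈ ℕ : {n} ∈ U} ∈ F, then every τ-open set is τ_L(F)-open. In particular, every τ_M(F)-open set is τ_L(F)-open; thus τ_L(F) is the maximal invariant topology on Finset ℕ in which F converges to the zero element ∅. -/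

lemma symm_union (g t : Finset ℕ) (n : ℕ) (hg : n ∉ g) (ht : n ∉ t) :
    symmDiff g (t ∪ {n}) = symmDiff g t ∪ {n} := by
  ext m
  by_cases hm : m = n
  · subst hm
    simp [Finset.mem_symmDiff, hg, ht]
  · simp [Finset.mem_symmDiff, hm]

lemma laver_preimage (F : Filter ℕ) (hF : F ≤ Filter.cofinite) (g : Finset ℕ)
    (U : Set (Finset ℕ)) (hU : IsLaverOpen F U) :
    IsLaverOpen F ((fun t => symmDiff g t) ⁻¹' U) := by
  intro t ht
  have h1 := hU (symmDiff g t) ht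
  have h2 := cofinite_above F hF (g ∪ t)
  refine Filter.mem_of_superset (Filter.inter_mem h1 h2) ?_
  rintro n ⟨⟨hn1, hn2⟩, hn3⟩
  have hng : n ∉ g := fun h => lt_irrefl n (hn3 n (Finset.mem_union_left _ h))
  have hnt : n ∉ t := fun h => lt_irrefl n (hn3 n (Finset.mem_union_right _ h))
  refine ⟨fun x hx => hn3 x (Finset.mem_union_right _ hx), ?_⟩
  show symmDiff g (t ∪ {n}) ∈ U
  rw [symm_union g t n hng hnt]
  exact hn2

/-- (a) Every translation of `(Finset ℕ, τ_L(F))` by symmetric difference is a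
homeomorphism, and every `τ_L(F)`-open set containing `∅` traces a filter set on
the singletons. (b) Conversely, every topology on `Finset ℕ` with these two
properties is coarser than `τ_L(F)`; in particular every `τ_M(F)`-open set is
`τ_L(F)`-open. Thus `τ_L(F)` is the maximal invariant topology on `Finset ℕ` in
which `F` converges to `∅`. -/
theorem stmt7 (F : Filter ℕ) (hproper : (∅ : Set ℕ) ∉ F)
    (hfree : F ≤ Filter.cofinite) :
    (∀ g : Finset ℕ,
        @IsHomeomorph (Finset ℕ) (Finset ℕ) (laverTop F hfree) (laverTop F hfree)
          (fun t => symmDiff g t)) ∧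
    (∀ U : Set (Finset ℕ), IsLaverOpen F U → (∅ : Finset ℕ) ∈ U →
        {n : ℕ | ({n} : Finset ℕ) ∈ U} ∈ F) ∧
    (∀ τ : TopologicalSpace (Finset ℕ),
        (∀ g : Finset ℕ, @Continuous _ _ τ τ (fun t => symmDiff g t)) →
        (∀ U : Set (Finset ℕ), τ.IsOpen U → (∅ : Finset ℕ) ∈ U →
            {n : ℕ | ({n} : Finset ℕ) ∈ U} ∈ F) →
        ∀ U : Set (Finset ℕ), τ.IsOpen U → IsLaverOpen F U) ∧
    (∀ U : Set (Finset ℕ), IsMathiasOpen F U → IsLaverOpen F U) := by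
  constructor
  · intro g
    have hinv : Function.Involutive (fun t => symmDiff g t) := fun t => by
      simp [symmDiff_symmDiff_cancel_left]
    refine @IsHomeomorph.mk _ _ (laverTop F hfree) (laverTop F hfree) _ ?_ ?_ hinv.bijective
    · exact @continuous_def _ _ (laverTop F hfree) (laverTop F hfree) _ |>.mpr
        (fun U hU => laver_preimage F hfree g U hU)
    · intro V hV
      have : (fun t => symmDiff g t) '' V = (fun t => symmDiff g t) ⁻¹' V := by
        ext x
        constructor
        · rintro ⟨y, hy, rfl⟩; simpa [hinv y] using hy
        · intro hx; exact ⟨symmDiff g x, hx, hinv x⟩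
      rw [this]
      exact laver_preimage F hfree g V hV
  refine ⟨fun U hU h0 => ?_, fun τ hcont hconv U hU t ht => ?_, fun U hU t ht => ?_⟩
  · refine Filter.mem_of_superset (hU ∅ h0) ?_
    rintro n ⟨-, hn⟩
    simpa using hn
  · have hV : τ.IsOpen ((fun s => symmDiff t s) ⁻¹' U) := (hcont t).isOpen_preimage U hU
    have h0 : (∅ : Finset ℕ) ∈ (fun s => symmDiff t s) ⁻¹' U := by
      show symmDiff t ∅ ∈ U
      have he : symmDiff t (∅ : Finset ℕ) = t := symmDiff_bot t
      rw [he]; exact ht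
    have h1 := hconv _ hV h0
    have h2 := cofinite_above F hfree t
    refine Filter.mem_of_superset (Filter.inter_mem h1 h2) ?_
    rintro n ⟨hn1, hn2⟩
    refine ⟨hn2, ?_⟩
    have hnt : n ∉ t := fun h => lt_irrefl n (hn2 n h)
    have : t ∪ {n} = symmDiff t {n} := by
      ext m
      by_cases hm : m = n
      · subst hm; simp [Finset.mem_symmDiff, hnt]
      · simp [Finset.mem_symmDiff, hm]
    rw [this]
    exact hn1
  · obtain ⟨A, hA, hA1, hA2⟩ := hU t ht
    refine Filter.mem_of_superset hA fun n hn => ⟨fun x hx => hA1 n hn x hx, ?_⟩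
    have := hA2 {n} (by simpa using hn)
    simpa using this
end

section
/- Let F be a free filter on ℕ. If the space (Finset ℕ, τ_M(F)) is extremally disconnected, then F is a Ramsey ultrafilter: F is selective and F is an ultrafilter (for every A ⊆ ℕ, either A ∈ F or ℕ \ A ∈ F). -/
section Aux

variable {F : Filter ℕ}

lemma filter_mem_nonempty (hproper : (∅ : Set ℕ) ∉ F) {B : Set ℕ} (hB : B ∈ F) :
    B.Nonempty := by
  rcases Set.eq_empty_or_nonempty B with h | h
  · exact absurd (h ▸ hB) hproper
  · exact h

/-- The "cone" above a finite set `t`: supersets whose extra elements dominate `t`. -/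
def Cone (t : Finset ℕ) : Set (Finset ℕ) :=
  {u : Finset ℕ | t ⊆ u ∧ ∀ x ∈ u, x ∈ t ∨ ∀ y ∈ t, y < x}

lemma self_mem_cone (t : Finset ℕ) : t ∈ Cone t :=
  ⟨Finset.Subset.refl t, fun x hx => Or.inl hx⟩

lemma cone_open (hF : F ≤ Filter.cofinite) (t : Finset ℕ) :
    IsMathiasOpen F (Cone t) := by
  rintro u ⟨htu, hu⟩
  refine ⟨{n | ∀ x ∈ u, x < n}, cofinite_above F hF u, fun a ha x hx => ha x hx, ?_⟩
  intro s hs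
  refine ⟨htu.trans Finset.subset_union_left, ?_⟩
  intro x hx
  rcases Finset.mem_union.1 hx with h | h
  · rcases hu x h with h' | h'
    · exact Or.inl h'
    · exact Or.inr h'
  · exact Or.inr fun y hy => hs h y (htu hy)

/-- `i` and `j` are the two least elements of `t`. -/
def TwoLeast (i j : ℕ) (t : Finset ℕ) : Prop :=
  i ∈ t ∧ j ∈ t ∧ i < j ∧ ∀ x ∈ t, x = i ∨ j ≤ x

/-- The basic open set used for selectivity. -/
def USel (A : ℕ → Set ℕ) : Set (Finset ℕ) :=
  {t | ∃ i j, TwoLeast i j t ∧ j ∈ A i}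

lemma USel_open (hF : F ≤ Filter.cofinite) (A : ℕ → Set ℕ) :
    IsMathiasOpen F (USel A) := by
  rintro t ⟨i, j, ⟨hi, hj, hij, hmin⟩, hAij⟩
  refine ⟨{n | ∀ x ∈ t, x < n}, cofinite_above F hF t, fun a ha x hx => ha x hx, ?_⟩
  intro s hs
  refine ⟨i, j, ⟨Finset.mem_union_left s hi, Finset.mem_union_left s hj, hij, ?_⟩, hAij⟩
  intro x hx
  rcases Finset.mem_union.1 hx with h | h
  · exact hmin x h
  · exact Or.inr (le_of_lt (hs h j hj))

/-- The basic open set used for the ultrafilter property: minimum lies in `A`. -/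
def UMin (A : Set ℕ) : Set (Finset ℕ) :=
  {t | ∃ i ∈ A, i ∈ t ∧ ∀ x ∈ t, i ≤ x}

lemma UMin_open (hF : F ≤ Filter.cofinite) (A : Set ℕ) :
    IsMathiasOpen F (UMin A) := by
  rintro t ⟨i, hiA, hit, hmin⟩
  refine ⟨{n | ∀ x ∈ t, x < n}, cofinite_above F hF t, fun a ha x hx => ha x hx, ?_⟩
  intro s hs
  refine ⟨i, hiA, Finset.mem_union_left s hit, ?_⟩
  intro x hx
  rcases Finset.mem_union.1 hx with h | h
  · exact hmin x h
  · exact le_of_lt (hs h i hit)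

lemma cone_singleton_disjoint_UMin {A : Set ℕ} {n : ℕ} (hn : n ∉ A) :
    Cone {n} ∩ UMin A = ∅ := by
  ext u
  simp only [Set.mem_inter_iff, Set.mem_empty_iff_false, iff_false]
  rintro ⟨⟨hsub, hcone⟩, i, hiA, hiu, hmin⟩
  have hnu : n ∈ u := hsub (Finset.mem_singleton_self n)
  have hin : i ≤ n := hmin n hnu
  rcases hcone i hiu with h | h
  · exact hn (Finset.mem_singleton.1 h ▸ hiA)
  · exact absurd (h n (Finset.mem_singleton_self n)) (not_lt.2 hin)

lemma cone_pair_disjoint_USel {A : ℕ → Set ℕ} {i j : ℕ} (hij : i < j) (hj : j ∉ A i) :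
    Cone {i, j} ∩ USel A = ∅ := by
  ext u
  simp only [Set.mem_inter_iff, Set.mem_empty_iff_false, iff_false]
  rintro ⟨⟨hsub, hcone⟩, i', j', ⟨hi', hj', hij', hmin⟩, hA⟩
  have hiu : i ∈ u := hsub (by simp)
  have hju : j ∈ u := hsub (by simp)
  -- i' = i
  have hii : i' = i := by
    rcases hmin i hiu with h | h
    · exact h.symm
    · -- j' ≤ i, so i' < i ; but cone forces i' ∈ {i,j} or i' > i, contradiction
      exfalso
      have hi'i : i' < i := lt_of_lt_of_le hij' h
      rcases hcone i' hi' with h' | h'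
      · rcases Finset.mem_insert.1 h' with h'' | h''
        · exact absurd h'' (ne_of_lt hi'i)
        · exact absurd (Finset.mem_singleton.1 h'') (ne_of_lt (hi'i.trans hij))
      · exact absurd (h' i (by simp)) (not_lt.2 (le_of_lt hi'i))
  subst hii
  -- j' = j
  have hjj : j' = j := by
    have h1 : j' ≤ j := by
      rcases hmin j hju with h | h
      · exact absurd h (ne_of_gt hij)
      · exact h
    rcases hcone j' hj' with h' | h'
    · rcases Finset.mem_insert.1 h' with h'' | h''
      · exact absurd h'' (ne_of_gt hij')
      · exact Finset.mem_singleton.1 h''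
    · exact le_antisymm h1 (le_of_lt (h' j (by simp)))
  subst hjj
  exact hj hA

end Aux

/-- If the Mathias topology `τ_M(F)` on `Finset ℕ` determined by a free filter
`F` on `ℕ` is extremally disconnected, then `F` is a Ramsey ultrafilter: `F` is
selective and an ultrafilter. -/
theorem stmt12 (F : Filter ℕ) (hproper : (∅ : Set ℕ) ∉ F)
    (hfree : F ≤ Filter.cofinite)
    (hed : @ExtremallyDisconnected (Finset ℕ) (mathiasTop F hfree)) :
    Selective F ∧ ∀ A : Set ℕ, A ∈ F ∨ Aᶜ ∈ F := by
  letI T : TopologicalSpace (Finset ℕ) := mathiasTop F hfree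
  have hopen_iff : ∀ U : Set (Finset ℕ), IsOpen U ↔ IsMathiasOpen F U := fun U => Iff.rfl
  constructor
  · -- Selectivity
    intro A hA
    set U0 : Set (Finset ℕ) := USel A with hU0
    have hU0open : IsOpen U0 := (hopen_iff U0).2 (USel_open hfree A)
    -- every singleton is in the closure of U0
    have hsing : ∀ n : ℕ, ({n} : Finset ℕ) ∈ closure U0 := by
      intro n
      rw [mem_closure_iff]
      intro V hV hnV
      obtain ⟨B, hB, hB1, hB2⟩ := (hopen_iff V).1 hV _ hnV
      have hmem : (B ∩ A n) ∈ F := F.inter_mem hB (hA n)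
      obtain ⟨m, hmB, hmA⟩ := filter_mem_nonempty hproper hmem
      have hnm : n < m := hB1 m hmB n (Finset.mem_singleton_self n)
      refine ⟨{n} ∪ {m}, ?_, ?_⟩
      · apply hB2
        intro x hx
        have : x = m := Finset.mem_singleton.1 hx
        exact this ▸ hmB
      · refine ⟨n, m, ⟨?_, ?_, hnm, ?_⟩, hmA⟩
        · simp
        · simp
        · intro x hx
          rcases Finset.mem_union.1 hx with h | h
          · exact Or.inl (Finset.mem_singleton.1 h)
          · exact Or.inr (le_of_eq (Finset.mem_singleton.1 h).symm)
    -- the empty set is in the closure of U0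
    have hempty : (∅ : Finset ℕ) ∈ closure U0 := by
      rw [mem_closure_iff]
      intro V hV hV0
      obtain ⟨B, hB, _, hB2⟩ := (hopen_iff V).1 hV _ hV0
      obtain ⟨n, hnB⟩ := filter_mem_nonempty hproper hB
      have hnV : ({n} : Finset ℕ) ∈ V := by
        have := hB2 {n} (by intro x hx; exact (Finset.mem_singleton.1 hx) ▸ hnB)
        simpa using this
      have := (mem_closure_iff.1 (hsing n)) V hV hnV
      obtain ⟨u, huV, huU⟩ := this
      exact ⟨u, huV, huU⟩
    -- closure U0 is open by extremal disconnectedness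
    have hclopen : IsOpen (closure U0) := hed.open_closure U0 hU0open
    obtain ⟨B, hB, _, hB2⟩ := (hopen_iff _).1 hclopen _ hempty
    refine ⟨B, hB, ?_⟩
    intro i hi j hj hij
    by_contra hjA
    have hpair : ({i, j} : Finset ℕ) ∈ closure U0 := by
      have := hB2 {i, j} (by
        intro x hx
        rcases Finset.mem_insert.1 hx with h | h
        · exact h ▸ hi
        · exact (Finset.mem_singleton.1 h) ▸ hj)
      simpa using this
    have := (mem_closure_iff.1 hpair) (Cone {i, j})
      ((hopen_iff _).2 (cone_open hfree _)) (self_mem_cone _)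
    obtain ⟨u, hu1, hu2⟩ := this
    have : u ∈ Cone {i, j} ∩ USel A := ⟨hu1, hu2⟩
    rw [cone_pair_disjoint_USel hij hjA] at this
    exact this
  · -- Ultrafilter
    intro A
    by_cases hcl : (∅ : Finset ℕ) ∈ closure (UMin A)
    · left
      have hclopen : IsOpen (closure (UMin A)) :=
        hed.open_closure _ ((hopen_iff _).2 (UMin_open hfree A))
      obtain ⟨B, hB, _, hB2⟩ := (hopen_iff _).1 hclopen _ hcl
      refine F.mem_of_superset hB ?_
      intro n hnB
      by_contra hnA
      have hsingcl : ({n} : Finset ℕ) ∈ closure (UMin A) := by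
        have := hB2 {n} (by intro x hx; exact (Finset.mem_singleton.1 hx) ▸ hnB)
        simpa using this
      have := (mem_closure_iff.1 hsingcl) (Cone {n})
        ((hopen_iff _).2 (cone_open hfree _)) (self_mem_cone _)
      obtain ⟨u, hu1, hu2⟩ := this
      have : u ∈ Cone {n} ∩ UMin A := ⟨hu1, hu2⟩
      rw [cone_singleton_disjoint_UMin hnA] at this
      exact this
    · right
      rw [mem_closure_iff] at hcl
      push_neg at hcl
      obtain ⟨V, hV, hV0, hVdisj⟩ := hcl
      obtain ⟨B, hB, _, hB2⟩ := (hopen_iff V).1 hV _ hV0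
      refine F.mem_of_superset hB ?_
      intro n hnB
      by_contra hnA
      have hnA' : n ∈ A := not_not.1 hnA
      have hnV : ({n} : Finset ℕ) ∈ V := by
        have := hB2 {n} (by intro x hx; exact (Finset.mem_singleton.1 hx) ▸ hnB)
        simpa using this
      have hnU : ({n} : Finset ℕ) ∈ UMin A :=
        ⟨n, hnA', Finset.mem_singleton_self n, fun x hx => le_of_eq (Finset.mem_singleton.1 hx).symm⟩
      have hmemVU : ({n} : Finset ℕ) ∈ V ∩ UMin A := ⟨hnV, hnU⟩
      rw [hVdisj] at hmemVU
      exact hmemVU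
end

section
/- Let G be a countable nondiscrete Boolean topological group containing a sequence (G_i)_{i ∈ ℕ} of open subgroups whose intersection ⋂_{i ∈ ℕ} G_i is the trivial subgroup {0}. Then G has a basis e : ℕ → G (every element of G is the sum of the e_k over some finite set of indices, and the sum of the e_k over any nonempty finite set of indices is nonzero) such that for every n ∈ ℕ the subgroup of G generated by {e_k : k ≥ n} is open in G. Consequently, the isomorphism of G onto the direct sum of countably many copies of ℤ/2 taking this basis to the canonical basis is continuous with respect to the product topology on the direct sum. -/
/-!
A Boolean group is a vector space over `ZMod 2`, and the open subgroups `Gᵢ` say that every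
nonzero vector avoids some open subspace. Starting from the splitting `V = 0 ⊕ V`, we build
splittings `V = span {e₀, …, eₙ₋₁} ⊕ Uₙ` with `Uₙ` open and decreasing: a nonzero `eₙ ∈ Uₙ` is
chosen so as to capture the `Uₙ`-component of the `n`-th element of an enumeration of `V`, and
`Uₙ₊₁` is a complement of `eₙ` in `Uₙ` that contains the open subspace `Uₙ ∩ W`, where `W` is an
open subspace missing `eₙ`. Nondiscreteness guarantees that `Uₙ ≠ 0`, so the construction never
stops. The `eₙ` form a basis, and the modular law shows that `span {eₖ : k ≥ n} = Uₙ` is open;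
hence each coordinate functional has an open kernel and is continuous into discrete `ZMod 2`.
-/

open Set Submodule

section LinearAlgebra

variable {ι R K V : Type*} [AddCommGroup V]

theorem LinearIndependent.sum_ne_zero [Ring R] [Nontrivial R] [Module R V] {v : ι → V}
    (hv : LinearIndependent R v) {s : Finset ι} (hs : s.Nonempty) : ∑ i ∈ s, v i ≠ 0 := by
  intro hsum
  obtain ⟨i, hi⟩ := hs
  exact one_ne_zero <| linearIndependent_iff'.mp hv s (fun _ => (1 : R)) (by simpa) i hi

theorem linearIndependent_of_notMem_span_image_Iio [LinearOrder ι] [DivisionRing K] [Module K V]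
    {v : ι → V} (hv : ∀ i, v i ∉ span K (v '' Iio i)) : LinearIndependent K v := by
  classical
  rw [linearIndependent_iff']
  intro s
  induction s using Finset.induction_on_max with
  | empty => simp
  | insert a s hlt ih =>
    intro c hsum
    rw [Finset.sum_insert fun has => (hlt a has).false] at hsum
    have hs_mem : ∑ i ∈ s, c i • v i ∈ span K (v '' Iio a) :=
      sum_mem fun i hi => smul_mem _ _ (subset_span ⟨i, hlt i hi, rfl⟩)
    have hca : c a = 0 := by
      by_contra hca
      refine hv a ?_
      have : v a = -(c a)⁻¹ • ∑ i ∈ s, c i • v i := by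
        rw [neg_smul, eq_neg_iff_add_eq_zero, ← inv_smul_smul₀ hca (v a), ← smul_add, hsum,
          smul_zero]
      exact this ▸ smul_mem _ _ hs_mem
    rw [hca, zero_smul, zero_add] at hsum
    intro i hi
    rcases Finset.mem_insert.mp hi with rfl | hi
    exacts [hca, ih c hsum i hi]

theorem span_image_Ici_eq_of_isCompl [LinearOrder ι] [Ring R] [Module R V] {v : ι → V}
    {U : Submodule R V} {n : ι} (hcompl : IsCompl (span R (v '' Iio n)) U)
    (hspan : span R (range v) = ⊤) (hv : ∀ k, n ≤ k → v k ∈ U) :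
    span R (v '' Ici n) = U := by
  have hle : span R (v '' Ici n) ≤ U := span_le.mpr <| by
    rintro _ ⟨k, hk, rfl⟩
    exact hv k hk
  have htop : span R (v '' Ici n) ⊔ span R (v '' Iio n) = ⊤ := by
    rw [← span_union, ← image_union, union_comm, Iio_union_Ici, image_univ, hspan]
  calc span R (v '' Ici n) = span R (v '' Ici n) ⊔ span R (v '' Iio n) ⊓ U := by
        rw [hcompl.inf_eq_bot, sup_bot_eq]
    _ = U := by rw [← sup_inf_assoc_of_le _ hle, htop, top_inf_eq]

theorem Submodule.exists_complement_span_singleton_ge [Field K] [Module K V]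
    {W U : Submodule K V} (hWU : W ≤ U) {x : V} (hxU : x ∈ U) (hxW : x ∉ W) :
    ∃ M : Submodule K V, W ≤ M ∧ M ≤ U ∧ Disjoint (K ∙ x) M ∧ (K ∙ x) ⊔ M = U := by
  obtain ⟨f, hfx, hfW⟩ := W.exists_dual_map_eq_bot_of_notMem hxW inferInstance
  refine ⟨U ⊓ LinearMap.ker f, le_inf hWU (LinearMap.le_ker_iff_map.mpr hfW), inf_le_left, ?_, ?_⟩
  · rw [disjoint_def]
    intro _ hy hyM
    obtain ⟨c, rfl⟩ := mem_span_singleton.mp hy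
    have hyf := (mem_inf.mp hyM).2
    rw [LinearMap.mem_ker, map_smul, smul_eq_mul, mul_eq_zero] at hyf
    rw [hyf.resolve_right hfx, zero_smul]
  · refine le_antisymm (sup_le (span_singleton_le_iff_mem _ _ |>.mpr hxU) inf_le_left) ?_
    intro y hy
    have hsplit : y = (f y / f x) • x + (y - (f y / f x) • x) := by abel
    rw [hsplit]
    refine add_mem_sup (smul_mem _ _ (mem_span_singleton_self x))
      (mem_inf.mpr ⟨sub_mem hy (smul_mem _ _ hxU), ?_⟩)
    rw [LinearMap.mem_ker, map_sub, map_smul, smul_eq_mul, div_mul_cancel₀ _ hfx, sub_self]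

end LinearAlgebra

section Topology

variable {K V : Type*} [Field K] [AddCommGroup V] [Module K V] [TopologicalSpace V]
  [IsTopologicalAddGroup V]

theorem Submodule.ne_bot_of_isOpen (hnd : ¬ DiscreteTopology V) {U : Submodule K V}
    (hU : IsOpen (U : Set V)) : U ≠ ⊥ := by
  rintro rfl
  exact hnd (discreteTopology_iff_isOpen_singleton_zero.mpr (by simpa using hU))


theorem exists_isOpen_complement_span_singleton (hnd : ¬ DiscreteTopology V)
    (hsep : ∀ x : V, x ≠ 0 → ∃ W : Submodule K V, IsOpen (W : Set V) ∧ x ∉ W)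
    {U : Submodule K V} (hU : IsOpen (U : Set V))
    {u : V} (hu : u ∈ U) :
    ∃ x ∈ U, x ≠ 0 ∧ u ∈ K ∙ x ∧ ∃ M : Submodule K V,
      IsOpen (M : Set V) ∧ M ≤ U ∧ Disjoint (K ∙ x) M ∧ (K ∙ x) ⊔ M = U := by
  obtain ⟨x, hxU, hx0, hux⟩ : ∃ x ∈ U, x ≠ 0 ∧ u ∈ K ∙ x := by
    by_cases hu0 : u = 0
    · obtain ⟨x, hxU, hx0⟩ := (Submodule.ne_bot_iff U).mp (U.ne_bot_of_isOpen hnd hU)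
      exact ⟨x, hxU, hx0, hu0 ▸ zero_mem _⟩
    · exact ⟨u, hu, hu0, mem_span_singleton_self u⟩
  obtain ⟨W, hW, hxW⟩ := hsep x hx0
  obtain ⟨M, hWM, hMU, hdisj, hsup⟩ :=
    exists_complement_span_singleton_ge (inf_le_left : U ⊓ W ≤ U) hxU fun h => hxW h.2
  exact ⟨x, hxU, hx0, hux, M, Submodule.isOpen_mono hWM (hU.inter hW), hMU, hdisj, hsup⟩

theorem exists_isCompl_sup_span_singleton (hnd : ¬ DiscreteTopology V)
    (hsep : ∀ x : V, x ≠ 0 → ∃ W : Submodule K V, IsOpen (W : Set V) ∧ x ∉ W)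
    {C U : Submodule K V} (hU : IsOpen (U : Set V)) (hCU : IsCompl C U) (y : V) :
    ∃ x ∈ U, x ≠ 0 ∧ ∃ U' : Submodule K V,
      IsOpen (U' : Set V) ∧ U' ≤ U ∧ IsCompl (C ⊔ K ∙ x) U' ∧ y ∈ C ⊔ K ∙ x := by
  obtain ⟨c, hc, u, hu, rfl⟩ := mem_sup.mp (hCU.sup_eq_top ▸ mem_top : y ∈ C ⊔ U)
  obtain ⟨x, hxU, hx0, hux, U', hU', hU'U, hdisj, hsup⟩ :=
    exists_isOpen_complement_span_singleton hnd hsep hU hu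
  refine ⟨x, hxU, hx0, U', hU', hU'U, ⟨?_, ?_⟩, add_mem_sup hc hux⟩
  · exact hdisj.disjoint_sup_left_of_disjoint_sup_right (hsup ▸ hCU.disjoint)
  · rw [codisjoint_iff, sup_assoc, hsup, hCU.sup_eq_top]

theorem exists_seq_isCompl_span_image_Iio (hnd : ¬ DiscreteTopology V)
    (hsep : ∀ x : V, x ≠ 0 → ∃ W : Submodule K V, IsOpen (W : Set V) ∧ x ∉ W) (g : ℕ → V) :
    ∃ (e : ℕ → V) (U : ℕ → Submodule K V), Antitone U ∧ ∀ n, IsOpen (U n : Set V) ∧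
      e n ∈ U n ∧ e n ≠ 0 ∧ IsCompl (span K (e '' Iio n)) (U n) ∧
      g n ∈ span K (e '' Iio (n + 1)) := by
  let Splitting := {p : Submodule K V × Submodule K V // IsOpen (p.2 : Set V) ∧ IsCompl p.1 p.2}
  choose x hxU hx0 U' hU' hU'U hcompl hmem using fun n (p : Splitting) =>
    exists_isCompl_sup_span_singleton hnd hsep p.2.1 p.2.2 (g n)
  let next (n : ℕ) (p : Splitting) : Splitting :=
    ⟨(p.1.1 ⊔ K ∙ x n p, U' n p), hU' n p, hcompl n p⟩
  let start : Splitting := ⟨(⊥, ⊤), by simp, isCompl_bot_top⟩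
  obtain ⟨s, hs0, hs⟩ : ∃ s : ℕ → Splitting, s 0 = start ∧ ∀ n, s (n + 1) = next n (s n) :=
    ⟨fun n => Nat.rec start next n, rfl, fun _ => rfl⟩
  set e : ℕ → V := fun n => x n (s n)
  have hC : ∀ n, (s n).1.1 = span K (e '' Iio n) := by
    intro n
    induction n with
    | zero => simp [hs0, start]
    | succ n ih =>
      rw [hs n, ← Order.succ_eq_add_one, Order.Iio_succ_eq_insert, image_insert_eq, span_insert,
        sup_comm, ← ih]
  refine ⟨e, fun n => (s n).1.2, antitone_nat_of_succ_le fun n => ?_, fun n =>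
    ⟨(s n).2.1, hxU n (s n), hx0 n (s n), hC n ▸ (s n).2.2, ?_⟩⟩
  · rw [hs n]
    exact hU'U n (s n)
  · rw [← hC, hs n]
    exact hmem n (s n)

theorem exists_basis_isOpen_span_image_Ici [Countable V] (hnd : ¬ DiscreteTopology V)
    (hsep : ∀ x : V, x ≠ 0 → ∃ W : Submodule K V, IsOpen (W : Set V) ∧ x ∉ W) :
    ∃ b : Module.Basis ℕ K V, ∀ n, IsOpen (span K (b '' Ici n) : Set V) := by
  obtain ⟨g, hg⟩ := exists_surjective_nat V
  obtain ⟨e, U, hanti, he⟩ := exists_seq_isCompl_span_image_Iio hnd hsep g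
  have hindep : LinearIndependent K e := linearIndependent_of_notMem_span_image_Iio fun n hn =>
    (he n).2.2.1 <| disjoint_def.mp (he n).2.2.2.1.disjoint _ hn (he n).2.1
  have hspan : span K (range e) = ⊤ := by
    refine eq_top_iff.mpr fun y _ => ?_
    obtain ⟨n, rfl⟩ := hg y
    exact span_mono (image_subset_range _ _) (he n).2.2.2.2
  refine ⟨.mk hindep hspan.ge, fun n => ?_⟩
  rw [Module.Basis.coe_mk, span_image_Ici_eq_of_isCompl (he n).2.2.2.1 hspan
    fun k hk => hanti hk (he k).2.1]
  exact (he n).1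

end Topology

theorem Module.Basis.continuous_repr_apply {ι R V : Type*} [Ring R] [TopologicalSpace R]
    [DiscreteTopology R] [AddCommGroup V] [Module R V] [TopologicalSpace V]
    [IsTopologicalAddGroup V] (b : Module.Basis ι R V) {s : Set ι} {i : ι} (hi : i ∉ s)
    (hs : IsOpen (span R (b '' s) : Set V)) : Continuous fun v => b.repr v i := by
  let coord : V →+ R := (Finsupp.lapply i ∘ₗ b.repr.toLinearMap).toAddMonoidHom
  refine continuous_of_continuousAt_zero coord ?_
  rw [ContinuousAt, map_zero, nhds_discrete R, Filter.tendsto_pure]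
  filter_upwards [hs.mem_nhds (zero_mem _)] with v hv
  exact Finsupp.notMem_support_iff.mp fun hiv => hi (b.repr_support_subset_of_mem_span s hv hiv)

theorem Module.Basis.sum_support_repr_zmod_two {ι V : Type*} [AddCommGroup V] [Module (ZMod 2) V]
    (b : Module.Basis ι (ZMod 2) V) (v : V) : ∑ i ∈ (b.repr v).support, b i = v := by
  conv_rhs => rw [← b.linearCombination_repr v, Finsupp.linearCombination_apply, Finsupp.sum]
  refine Finset.sum_congr rfl fun i hi => ?_
  have hone : ∀ c : ZMod 2, c ≠ 0 → c = 1 := by decide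
  rw [hone _ (Finsupp.mem_support_iff.mp hi), one_smul]

theorem AddSubgroup.coe_closure_eq_span_zmod {n : ℕ} {G : Type*} [AddCommGroup G]
    [Module (ZMod n) G] (s : Set G) : (closure s : Set G) = span (ZMod n) s :=
  Subset.antisymm ((closure_le (span (ZMod n) s).toAddSubgroup).mpr subset_span)
    (span_le.mpr subset_closure : span (ZMod n) s ≤ toZModSubmodule n (closure s))

/-- A countable nondiscrete Boolean topological group with a sequence of open
subgroups intersecting in `{0}` has a basis `e : ℕ → G` such that every subgroup
generated by a tail `{e k : k ≥ n}` is open; consequently, the isomorphism of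
`G` onto the direct sum `⨁_ℕ ℤ/2` taking this basis to the canonical basis is
continuous with respect to the product topology on the direct sum. -/
theorem stmt13 {G : Type*} [AddCommGroup G] [TopologicalSpace G] [IsTopologicalAddGroup G]
    [Countable G] (hnd : ¬ DiscreteTopology G) (hbool : ∀ g : G, g + g = 0)
    (Gi : ℕ → AddSubgroup G) (hopen : ∀ i, IsOpen (Gi i : Set G))
    (hinter : ⋂ i, (Gi i : Set G) = {0}) :
    ∃ e : ℕ → G,
      (∀ g : G, ∃ s : Finset ℕ, g = ∑ k ∈ s, e k) ∧
      (∀ s : Finset ℕ, s.Nonempty → ∑ k ∈ s, e k ≠ 0) ∧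
      (∀ n : ℕ, IsOpen (AddSubgroup.closure (e '' {k | n ≤ k}) : Set G)) ∧
      ∃ c : G →+ (ℕ →₀ ZMod 2), Function.Bijective c ∧
        (∀ k : ℕ, c (e k) = Finsupp.single k 1) ∧
        @Continuous G (ℕ → ZMod 2) _
          (@Pi.topologicalSpace ℕ (fun _ => ZMod 2) (fun _ => ⊥))
          (fun g => (c g : ℕ → ZMod 2)) := by
  let _ : Module (ZMod 2) G := AddCommGroup.zmodModule fun g => (two_nsmul g).trans (hbool g)
  have hsep (x : G) (hx : x ≠ 0) :
      ∃ W : Submodule (ZMod 2) G, IsOpen (W : Set G) ∧ x ∉ W := by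
    obtain ⟨i, hi⟩ : ∃ i, x ∉ Gi i := by
      by_contra! h
      exact hx (by simpa [hinter] using mem_iInter.mpr h)
    exact ⟨AddSubgroup.toZModSubmodule 2 (Gi i), hopen i, hi⟩
  obtain ⟨b, hb⟩ := exists_basis_isOpen_span_image_Ici hnd hsep
  refine ⟨b, fun g => ⟨_, (b.sum_support_repr_zmod_two g).symm⟩,
    fun s hs => b.linearIndependent.sum_ne_zero hs,
    fun n => by rw [AddSubgroup.coe_closure_eq_span_zmod (n := 2)]; exact hb n,
    b.repr.toLinearMap.toAddMonoidHom, b.repr.bijective, b.repr_self, ?_⟩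
  let _ : TopologicalSpace (ZMod 2) := ⊥
  have : DiscreteTopology (ZMod 2) := ⟨rfl⟩
  exact continuous_pi fun k => b.continuous_repr_apply (lt_irrefl k) (hb (k + 1))
end

section
/- Every countable Hausdorff Boolean topological group G has a basis E (a linearly independent subset generating G) such that E is discrete in the subspace topology and the closure of E is contained in E ∪ {0}. Consequently, G has either a closed discrete basis or a discrete basis whose unique limit point is the zero element 0. -/
/-
Enumerate `G = {g₀, g₁, …}` and view `G` as a vector space over `ZMod 2`. We build finite
independent sets `E₀ ⊆ E₁ ⊆ …` together with closed sets `K₀ ⊆ K₁ ⊆ …` not containing `0`,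
such that `Eₙ ∪ Kₙᶜ` spans `G` and every vector added after stage `n` lies outside `Kₙ`.
At stage `n`, `gₙ` is put into the span of `Eₙ₊₁` using vectors from `Kₙᶜ`, and a closed
neighbourhood `N` of `gₙ` meeting `Eₙ₊₁` at most in `gₙ` is added to the forbidden set. Choosing
`N = gₙ + C` for a small neighbourhood `C` of `0` inside `Kₙᶜ`, every point of `N` is `gₙ` plus a
point of `C ⊆ (Kₙ ∪ N)ᶜ`, so the spanning condition survives. The union of the `Eₙ` is a basis,
and each `gₙ ≠ 0` has a neighbourhood meeting it at most in `gₙ`: the basis is discrete and its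
only possible limit point is `0`.
-/

section

open Set Filter Topology Submodule

theorem LinearIndepOn.sum_ne_zero {R M : Type*} [Ring R] [Nontrivial R] [AddCommGroup M]
    [Module R M] {E : Set M} (hE : LinearIndepOn R id E) {t : Finset M} (htE : ↑t ⊆ E)
    (ht : t.Nonempty) : ∑ x ∈ t, x ≠ 0 := by
  intro h0
  obtain ⟨x, hx⟩ := ht
  exact one_ne_zero (linearIndepOn_iff'.mp hE t 1 htE (by simpa using h0) x hx)

theorem addSubgroupClosure_eq_top_of_span_zmod_eq_top {n : ℕ} {M : Type*} [AddCommGroup M]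
    [Module (ZMod n) M] {E : Set M} (hE : span (ZMod n) E = ⊤) : AddSubgroup.closure E = ⊤ :=
  eq_top_iff.mpr fun g _ ↦ (AddSubgroup.mem_toZModSubmodule n).mp <|
    (span_le (p := AddSubgroup.toZModSubmodule n _)).mpr AddSubgroup.subset_closure
      (hE ▸ mem_top : g ∈ span (ZMod n) E)

theorem exists_finite_linearIndepOn_extension {R M : Type*} [DivisionRing R] [AddCommGroup M]
    [Module R M] {E S : Set M} {x : M} (hE : E.Finite) (hEi : LinearIndepOn R id E)
    (hx : x ∈ span R (E ∪ S)) :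
    ∃ E', E ⊆ E' ∧ E' \ E ⊆ S ∧ E'.Finite ∧ LinearIndepOn R id E' ∧ x ∈ span R E' := by
  obtain ⟨T, hTES, hxT⟩ := mem_span_finite_of_mem_span hx
  obtain ⟨E', hE'T, hEE', hspan, hE'i⟩ :=
    exists_linearIndepOn_id_extension hEi (subset_union_left : E ⊆ E ∪ T)
  refine ⟨E', hEE', ?_, (hE.union T.finite_toSet).subset hE'T, hE'i,
    span_le.mpr hspan (span_mono subset_union_right hxT)⟩
  rintro y ⟨hyE', hyE⟩
  exact (hTES ((hE'T hyE').resolve_left hyE)).resolve_left hyE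

section

variable {X : Type*} [TopologicalSpace X] {E : Set X} {a : X}

theorem closure_subset_union_singleton_of_forall_nhds_inter_subset
    (h : ∀ y ≠ a, ∃ N ∈ 𝓝 y, N ∩ E ⊆ {y}) : closure E ⊆ E ∪ {a} := by
  intro y hy
  by_contra hyEa
  obtain ⟨hyE, hya⟩ := not_or.mp hyEa
  obtain ⟨N, hN, hNE⟩ := h y hya
  obtain ⟨z, hzN, hzE⟩ := mem_closure_iff_nhds.mp hy N hN
  exact hyE (hNE ⟨hzN, hzE⟩ ▸ hzE)

theorem exists_isOpen_inter_eq_singleton_of_forall_nhds_inter_subset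
    (h : ∀ y ≠ a, ∃ N ∈ 𝓝 y, N ∩ E ⊆ {y}) (ha : a ∉ E) {x : X} (hx : x ∈ E) :
    ∃ U, IsOpen U ∧ U ∩ E = {x} := by
  obtain ⟨N, hN, hNE⟩ := h x (ne_of_mem_of_not_mem hx ha)
  refine ⟨interior N, isOpen_interior, ?_⟩
  exact ((inter_subset_inter_left E interior_subset).trans hNE).antisymm
    (singleton_subset_iff.mpr ⟨mem_interior_iff_mem_nhds.mpr hN, hx⟩)

end

variable {V : Type*} [AddCommGroup V] [Module (ZMod 2) V]

theorem ZModModule.add_add_cancel_left (x y : V) : x + (x + y) = y := by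
  rw [← add_assoc, ZModModule.add_self, zero_add]

variable [TopologicalSpace V]

section

variable [IsTopologicalAddGroup V] [T1Space V]

/-- The neighbourhood `N` of `x` is added to the forbidden set `K`; the last clause keeps
`E ∪ (K ∪ N)ᶜ` spanning once `x ∈ span E`. -/
theorem exists_isClosed_nhds_isolating {K F : Set V} {x : V} (hK : IsClosed K) (hK0 : (0 : V) ∉ K)
    (hF : F.Finite) (hx : x ≠ 0) :
    ∃ N ∈ 𝓝 x, IsClosed N ∧ (0 : V) ∉ N ∧ N ∩ F ⊆ {x} ∧
      Kᶜ ⊆ span (ZMod 2) (insert x (K ∪ N)ᶜ) := by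
  obtain ⟨D, hDo, hD0, hD⟩ :=
    exists_open_nhds_zero_half (isOpen_compl_singleton.mem_nhds hx.symm : {x}ᶜ ∈ 𝓝 (0 : V))
  have hW : D ∩ Kᶜ ∩ ((x + ·) ⁻¹' (F \ {x}))ᶜ ∈ 𝓝 (0 : V) :=
    inter_mem (inter_mem (hDo.mem_nhds hD0) (hK.isOpen_compl.mem_nhds hK0))
      (((hF.sdiff.isClosed).preimage (continuous_const_add x)).isOpen_compl.mem_nhds (by simp))
  obtain ⟨C, hC0, hCc, hCW⟩ := exists_mem_nhds_isClosed_subset hW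
  -- `N = x + C`; it is disjoint from `C` because `x ∉ D + D`.
  set N := (x + ·) ⁻¹' C
  have hCN : ∀ c ∈ C, c ∉ N := fun c hc hcN ↦ hD c (hCW hc).1.1 (x + c) (hCW hcN).1.1 <|
    show c + (x + c) = x by rw [add_left_comm, ZModModule.add_self, add_zero]
  refine ⟨N, (continuous_const_add x).continuousAt.preimage_mem_nhds
    (by rwa [ZModModule.add_self]), hCc.preimage (continuous_const_add x), fun h0 ↦ ?_, ?_, ?_⟩
  · exact hD x (by simpa using (hCW h0).1.1) 0 hD0 (add_zero x)
  · rintro y ⟨hyN, hyF⟩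
    by_contra hyx
    refine (hCW hyN).2 ?_
    show x + (x + y) ∈ F \ {x}
    rw [ZModModule.add_add_cancel_left]
    exact ⟨hyF, hyx⟩
  · intro v hv
    by_cases hvN : v ∈ N
    · have hxv : x + v ∈ (K ∪ N)ᶜ := not_or.mpr ⟨(hCW hvN).1.2, hCN _ hvN⟩
      rw [← ZModModule.add_add_cancel_left x v]
      exact add_mem (subset_span (mem_insert x _)) (subset_span (mem_insert_of_mem x hxv))
    · exact subset_span (mem_insert_of_mem x (not_or.mpr ⟨hv, hvN⟩))

end

/-- `K` is the closed set that vectors added to `E` at later stages must avoid. -/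
structure BasisStage (V : Type*) [AddCommGroup V] [Module (ZMod 2) V] [TopologicalSpace V] where
  E : Set V
  K : Set V
  finite_E : E.Finite
  linearIndepOn_E : LinearIndepOn (ZMod 2) id E
  isClosed_K : IsClosed K
  zero_notMem_K : (0 : V) ∉ K
  span_E_union_compl_K : span (ZMod 2) (E ∪ Kᶜ) = ⊤

namespace BasisStage

def empty : BasisStage V where
  E := ∅
  K := ∅
  finite_E := finite_empty
  linearIndepOn_E := linearIndepOn_empty _ _
  isClosed_K := isClosed_empty
  zero_notMem_K := notMem_empty 0
  span_E_union_compl_K := by simp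

structure Step (s t : BasisStage V) (x : V) : Prop where
  E_subset : s.E ⊆ t.E
  K_subset : s.K ⊆ t.K
  diff_subset_compl_K : t.E \ s.E ⊆ s.Kᶜ
  mem_span : x ∈ span (ZMod 2) t.E
  exists_nhds : x ≠ 0 → ∃ N ∈ 𝓝 x, N ⊆ t.K ∧ N ∩ t.E ⊆ {x}

variable [IsTopologicalAddGroup V] [T1Space V]

theorem exists_step (s : BasisStage V) (x : V) : ∃ t, s.Step t x := by
  by_cases hx : x = 0
  · exact ⟨s, subset_rfl, subset_rfl, by simp, hx ▸ zero_mem _, fun h ↦ absurd hx h⟩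
  obtain ⟨E', hEE', hdiff, hE'fin, hE'i, hxE'⟩ := exists_finite_linearIndepOn_extension
    s.finite_E s.linearIndepOn_E (s.span_E_union_compl_K ▸ mem_top : x ∈ span (ZMod 2) (s.E ∪ s.Kᶜ))
  obtain ⟨N, hNx, hNc, hN0, hNE', hspanN⟩ :=
    exists_isClosed_nhds_isolating s.isClosed_K s.zero_notMem_K hE'fin hx
  refine ⟨⟨E', s.K ∪ N, hE'fin, hE'i, s.isClosed_K.union hNc,
    not_or.mpr ⟨s.zero_notMem_K, hN0⟩, ?_⟩, hEE', subset_union_left, hdiff, hxE', fun _ ↦ ⟨N, hNx, subset_union_right, hNE'⟩⟩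
  rw [eq_top_iff, ← s.span_E_union_compl_K, span_le]
  rintro v (hvE | hvK)
  · exact subset_span (Or.inl (hEE' hvE))
  · refine span_le.mpr ?_ (hspanN hvK)
    exact insert_subset (span_mono subset_union_left hxE') (subset_union_right.trans subset_span)

noncomputable def seq (f : ℕ → V) : ℕ → BasisStage V
  | 0 => empty
  | n + 1 => Classical.choose ((seq f n).exists_step (f n))

variable (f : ℕ → V)

theorem seq_step (n : ℕ) : (seq f n).Step (seq f (n + 1)) (f n) :=
  Classical.choose_spec ((seq f n).exists_step (f n))

theorem monotone_seq_E : Monotone fun n ↦ (seq f n).E :=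
  monotone_nat_of_le_succ fun n ↦ (seq_step f n).E_subset

theorem monotone_seq_K : Monotone fun n ↦ (seq f n).K :=
  monotone_nat_of_le_succ fun n ↦ (seq_step f n).K_subset

theorem seq_E_diff_subset_compl_K {j m : ℕ} (hjm : j ≤ m) :
    (seq f m).E \ (seq f j).E ⊆ (seq f j).Kᶜ := by
  induction m, hjm using Nat.le_induction with
  | base => simp
  | succ m hjm ih =>
    rintro y ⟨hym, hyj⟩
    by_cases hy : y ∈ (seq f m).E
    · exact ih ⟨hy, hyj⟩
    · exact fun hyK ↦ (seq_step f m).diff_subset_compl_K ⟨hym, hy⟩ (monotone_seq_K f hjm hyK)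

theorem exists_nhds_inter_iUnion_seq_E_subset {n : ℕ} (hn : f n ≠ 0) :
    ∃ N ∈ 𝓝 (f n), N ∩ ⋃ m, (seq f m).E ⊆ {f n} := by
  obtain ⟨N, hN, hNK, hNE⟩ := (seq_step f n).exists_nhds hn
  refine ⟨N, hN, ?_⟩
  rintro y ⟨hyN, hyE⟩
  obtain ⟨m, hym⟩ := mem_iUnion.mp hyE
  by_contra hy
  have hyn : y ∉ (seq f (n + 1)).E := fun h ↦ hy (hNE ⟨hyN, h⟩)
  exact seq_E_diff_subset_compl_K f (le_max_right m (n + 1))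
    ⟨monotone_seq_E f (le_max_left m (n + 1)) hym, hyn⟩ (hNK hyN)

end BasisStage

theorem exists_linearIndepOn_span_eq_top_forall_nhds_inter_subset [IsTopologicalAddGroup V]
    [T1Space V] [Countable V] :
    ∃ E : Set V, LinearIndepOn (ZMod 2) id E ∧ span (ZMod 2) E = ⊤ ∧
      ∀ y ≠ 0, ∃ N ∈ 𝓝 y, N ∩ E ⊆ {y} := by
  obtain ⟨f, hf⟩ := exists_surjective_nat V
  refine ⟨⋃ n, (BasisStage.seq f n).E,
    linearIndepOn_iUnion_of_directed (BasisStage.monotone_seq_E f).directed_le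
      fun n ↦ (BasisStage.seq f n).linearIndepOn_E, eq_top_iff.mpr fun g _ ↦ ?_, fun y hy ↦ ?_⟩
  · obtain ⟨n, rfl⟩ := hf g
    exact span_mono (subset_iUnion _ (n + 1)) (BasisStage.seq_step f n).mem_span
  · obtain ⟨n, rfl⟩ := hf y
    exact BasisStage.exists_nhds_inter_iUnion_seq_E_subset f hy

end

/-- Every countable Hausdorff Boolean topological group has a basis `E`
(a linearly independent generating set) that is discrete in the subspace
topology and whose closure is contained in `E ∪ {0}`: thus `G` has either a
closed discrete basis or a discrete basis whose unique limit point is `0`. -/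
theorem stmt14 {G : Type*} [AddCommGroup G] [TopologicalSpace G] [IsTopologicalAddGroup G]
    [T2Space G] [Countable G] (hbool : ∀ g : G, g + g = 0) :
    ∃ E : Set G,
      (∀ t : Finset G, ↑t ⊆ E → t.Nonempty → ∑ x ∈ t, x ≠ 0) ∧
      AddSubgroup.closure E = ⊤ ∧
      (∀ x ∈ E, ∃ U : Set G, IsOpen U ∧ U ∩ E = {x}) ∧
      closure E ⊆ E ∪ {0} := by
  let _ : Module (ZMod 2) G := AddCommGroup.zmodModule fun g ↦ by rw [two_nsmul, hbool]
  obtain ⟨E, hind, hspan, hiso⟩ :=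
    exists_linearIndepOn_span_eq_top_forall_nhds_inter_subset (V := G)
  have hE0 : (0 : G) ∉ E := fun h ↦ hind.ne_zero h rfl
  exact ⟨E, fun t ↦ hind.sum_ne_zero, addSubgroupClosure_eq_top_of_span_zmod_eq_top hspan,
    fun x ↦ exists_isOpen_inter_eq_singleton_of_forall_nhds_inter_subset hiso hE0,
    closure_subset_union_singleton_of_forall_nhds_inter_subset hiso⟩
end

section
/- Let G be a Boolean group, let N be a seminorm on G, and let e : ℕ → G be greedily minimal for N. Then for every nonempty finite set s ⊆ ℕ and every i ∈ s, N(e i) ≤ 2^k · N(∑_{j ∈ s} e j), where k = |{j ∈ s : j > i}| is the number of elements of s greater than i. -/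
/-- Let `N` be a seminorm on a Boolean group `G` and let `e : ℕ → G` be greedily
minimal for `N`. Then for every nonempty finite `s ⊆ ℕ` and every `i ∈ s`,
`N (e i) ≤ 2 ^ k * N (∑ j ∈ s, e j)` where `k` is the number of elements of `s`
greater than `i`. -/
theorem stmt15 {G : Type*} [AddCommGroup G] (hbool : ∀ g : G, g + g = 0)
    (N : G → ℝ) (hN0 : N 0 = 0) (hNnonneg : ∀ g, 0 ≤ N g)
    (hNtri : ∀ g h, N (g + h) ≤ N g + N h)
    (e : ℕ → G)
    (hmin : ∀ m : ℕ, ∀ g ∈ AddSubgroup.closure (e '' {j | j < m}),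
      N (e m) ≤ N (e m + g)) :
    ∀ s : Finset ℕ, s.Nonempty → ∀ i ∈ s,
      N (e i) ≤ (2 : ℝ) ^ (s.filter fun j => i < j).card * N (∑ j ∈ s, e j) := by
  have key : ∀ s : Finset ℕ, ∀ hs : s.Nonempty, N (e (s.max' hs)) ≤ N (∑ j ∈ s, e j) := by
    intro s hs
    set m := s.max' hs with hm
    have hmem : m ∈ s := s.max'_mem hs
    have hsum : ∑ j ∈ s, e j = e m + ∑ j ∈ s.erase m, e j :=
      (Finset.add_sum_erase s e hmem).symm
    rw [hsum]
    apply hmin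
    apply AddSubgroup.sum_mem
    intro j hj
    exact AddSubgroup.subset_closure
      (Set.mem_image_of_mem e (Finset.lt_max'_of_mem_erase_max' s hs hj))
  intro s
  induction s using Finset.strongInduction with
  | _ s ih =>
    intro hs i hi
    set m := s.max' hs with hm
    by_cases him : i = m
    · have hfilt : s.filter (fun j => i < j) = ∅ := by
        apply Finset.filter_eq_empty_iff.mpr
        intro j hj
        simp only [not_lt]
        exact him ▸ s.le_max' j hj
      have := key s hs
      rw [hfilt]
      simpa using him ▸ this
    · have hilt : i < m := lt_of_le_of_ne (s.le_max' i hi) him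
      have hmem : m ∈ s := s.max'_mem hs
      set s' := s.erase m with hs'
      have hi' : i ∈ s' := Finset.mem_erase.mpr ⟨him, hi⟩
      have hss : s' ⊂ s := Finset.erase_ssubset hmem
      have hne : s'.Nonempty := ⟨i, hi'⟩
      have hih := ih s' hss hne i hi'
      have hmfilt : m ∈ s.filter (fun j => i < j) := Finset.mem_filter.mpr ⟨hmem, hilt⟩
      have hk : 1 ≤ (s.filter fun j => i < j).card := Finset.card_pos.mpr ⟨m, hmfilt⟩
      have hcard : (s'.filter fun j => i < j).card = (s.filter fun j => i < j).card - 1 := by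
        rw [hs', Finset.filter_erase, Finset.card_erase_of_mem hmfilt]
      have hNm : N (e m) ≤ N (∑ j ∈ s, e j) := key s hs
      have hsum : ∑ j ∈ s, e j = e m + ∑ j ∈ s', e j :=
        (Finset.add_sum_erase s e hmem).symm
      have hsum' : ∑ j ∈ s', e j = (∑ j ∈ s, e j) + e m := by
        rw [hsum, add_comm (e m) (∑ j ∈ s', e j), add_assoc, hbool, add_zero]
      have hN' : N (∑ j ∈ s', e j) ≤ 2 * N (∑ j ∈ s, e j) := by
        rw [hsum']
        calc N ((∑ j ∈ s, e j) + e m) ≤ N (∑ j ∈ s, e j) + N (e m) := hNtri _ _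
          _ ≤ 2 * N (∑ j ∈ s, e j) := by linarith
      have hpow : (2 : ℝ) ^ (s.filter fun j => i < j).card
          = 2 ^ ((s.filter fun j => i < j).card - 1) * 2 := by
        rw [← pow_succ, Nat.sub_add_cancel hk]
      have hpownn : (0:ℝ) ≤ 2 ^ ((s.filter fun j => i < j).card - 1) := by positivity
      calc N (e i) ≤ 2 ^ (s'.filter fun j => i < j).card * N (∑ j ∈ s', e j) := hih
        _ = 2 ^ ((s.filter fun j => i < j).card - 1) * N (∑ j ∈ s', e j) := by rw [hcard]
        _ ≤ 2 ^ ((s.filter fun j => i < j).card - 1) * (2 * N (∑ j ∈ s, e j)) :=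
            mul_le_mul_of_nonneg_left hN' hpownn
        _ = (2 : ℝ) ^ (s.filter fun j => i < j).card * N (∑ j ∈ s, e j) := by
            rw [hpow]; ring
end

section
/- Let G be a Boolean group, let N be a norm on G, and let e : ℕ → G be greedily minimal for N with N(e i) > 0 for every i ∈ ℕ. Then for every n ∈ ℕ the set of elements representable as ∑_{j ∈ s} e j with |s| = n is discrete with respect to N: for every finite s ⊆ ℕ with |s| = n there exists d > 0 such that for every finite s' ⊆ ℕ with |s'| = n, if N(∑_{j ∈ s} e j + ∑_{j ∈ s'} e j) < d then ∑_{j ∈ s'} e j = ∑_{j ∈ s} e j. -/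
/-- Let `N` be a norm on a Boolean group `G` and let `e : ℕ → G` be greedily
minimal for `N`, with `N (e i) > 0` for all `i`. Then for every `n` the set of
sums `∑_{j ∈ s} e j` with `|s| = n` is discrete with respect to `N`. -/
theorem stmt16 {G : Type*} [AddCommGroup G] (hbool : ∀ g : G, g + g = 0)
    (N : G → ℝ) (hN0 : N 0 = 0) (hNnonneg : ∀ g, 0 ≤ N g)
    (hNtri : ∀ g h, N (g + h) ≤ N g + N h)
    (hNnorm : ∀ g, N g = 0 → g = 0)
    (e : ℕ → G)
    (hmin : ∀ m : ℕ, ∀ g ∈ AddSubgroup.closure (e '' {j | j < m}),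
      N (e m) ≤ N (e m + g))
    (hepos : ∀ i, 0 < N (e i)) :
    ∀ n : ℕ, ∀ s : Finset ℕ, s.card = n →
      ∃ d > (0 : ℝ), ∀ s' : Finset ℕ, s'.card = n →
        N ((∑ j ∈ s, e j) + ∑ j ∈ s', e j) < d →
        (∑ j ∈ s', e j) = ∑ j ∈ s, e j := by
  -- membership of sums of earlier generators in the closure
  have hclos : ∀ (m : ℕ) (t : Finset ℕ), (∀ j ∈ t, j < m) →
      (∑ j ∈ t, e j) ∈ AddSubgroup.closure (e '' {j | j < m}) := by
    intro m t ht
    exact AddSubgroup.sum_mem _ fun j hj => AddSubgroup.subset_closure ⟨j, ht j hj, rfl⟩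
  -- positivity of the norm at nonzero points
  have hpos : ∀ g : G, g ≠ 0 → 0 < N g := by
    intro g hg
    exact (hNnonneg g).lt_of_ne fun h => hg (hNnorm g h.symm)
  -- a nonempty sum has positive norm
  have hsum_pos : ∀ t : Finset ℕ, t.Nonempty → 0 < N (∑ j ∈ t, e j) := by
    intro t ht
    have hm : t.max' ht ∈ t := t.max'_mem ht
    have h1 : (∑ j ∈ t, e j) = e (t.max' ht) + ∑ j ∈ t.erase (t.max' ht), e j :=
      (Finset.add_sum_erase _ _ hm).symm
    have h2 : N (e (t.max' ht)) ≤ N (∑ j ∈ t, e j) := by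
      rw [h1]
      exact hmin _ _ (hclos _ _ fun j hj =>
        lt_of_le_of_ne (t.le_max' j (Finset.mem_of_mem_erase hj)) (Finset.ne_of_mem_erase hj))
    exact lt_of_lt_of_le (hepos _) h2
  -- sums over distinct finsets differ
  have hsum_ne : ∀ a b : Finset ℕ, a ≠ b → (∑ j ∈ a, e j) + (∑ j ∈ b, e j) ≠ 0 := by
    intro a b hab
    have hsd : (∑ j ∈ a, e j) + (∑ j ∈ b, e j) = ∑ j ∈ (symmDiff a b), e j := by
      have h1 : (∑ j ∈ a ∩ b, e j) + ∑ j ∈ a \ b, e j = ∑ j ∈ a, e j :=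
        Finset.sum_inter_add_sum_sdiff a b e
      have h2 : (∑ j ∈ b ∩ a, e j) + ∑ j ∈ b \ a, e j = ∑ j ∈ b, e j :=
        Finset.sum_inter_add_sum_sdiff b a e
      have h3 : symmDiff a b = (a \ b) ∪ (b \ a) := by
        rw [symmDiff_def]; rfl
      rw [h3, Finset.sum_union disjoint_sdiff_sdiff, ← h1, ← h2, Finset.inter_comm b a]
      have h4 : (∑ j ∈ a ∩ b, e j) + (∑ j ∈ a ∩ b, e j) = 0 := hbool _
      have h5 : ((∑ j ∈ a ∩ b, e j) + ∑ j ∈ a \ b, e j)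
          + ((∑ j ∈ a ∩ b, e j) + ∑ j ∈ b \ a, e j)
          = ((∑ j ∈ a ∩ b, e j) + ∑ j ∈ a ∩ b, e j)
            + ((∑ j ∈ a \ b, e j) + ∑ j ∈ b \ a, e j) := by abel
      rw [h5, h4, zero_add]
    have hne : (symmDiff a b).Nonempty := by
      rw [Finset.nonempty_iff_ne_empty]
      intro h
      exact hab (symmDiff_eq_bot.mp h)
    rw [hsd]
    intro h0
    exact absurd (by rw [h0, hN0] : N (∑ j ∈ (symmDiff a b), e j) = 0) (ne_of_gt (hsum_pos _ hne))
  -- main claim, by induction on the cardinality bound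
  have key : ∀ k : ℕ, ∀ s : Finset ℕ, k ≤ s.card →
      ∃ d > (0 : ℝ), ∀ s' : Finset ℕ, s' ≠ s → s'.card ≤ k →
        d ≤ N ((∑ j ∈ s, e j) + ∑ j ∈ s', e j) := by
    intro k
    induction k with
    | zero =>
      intro s _
      by_cases hs : s = ∅
      · exact ⟨1, one_pos, fun s' hne hc =>
          absurd (by rw [Finset.card_eq_zero.mp (Nat.le_zero.mp hc), hs]) hne⟩
      · refine ⟨N (∑ j ∈ s, e j), hsum_pos s (Finset.nonempty_iff_ne_empty.mpr hs), ?_⟩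
        intro s' _ hc
        rw [Finset.card_eq_zero.mp (Nat.le_zero.mp hc)]
        simp
    | succ k ih =>
      intro s hk
      have hs : s.Nonempty := Finset.card_pos.mp (Nat.lt_of_lt_of_le (Nat.succ_pos k) hk)
      obtain ⟨d', hd', hIH⟩ := ih s (Nat.le_of_succ_le hk)
      set M := s.max' hs with hM
      -- the finitely many small candidates
      set T : Finset (Finset ℕ) := (Finset.range (M + 1)).powerset.filter (· ≠ s) with hT
      have hTne : T.Nonempty := by
        refine ⟨∅, ?_⟩
        rw [hT, Finset.mem_filter, Finset.mem_powerset]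
        exact ⟨Finset.empty_subset _, fun h => hs.ne_empty h.symm⟩
      set d₀ := T.inf' hTne (fun s' => N ((∑ j ∈ s, e j) + ∑ j ∈ s', e j)) with hd₀
      have hd₀pos : 0 < d₀ := by
        rw [hd₀, Finset.lt_inf'_iff]
        intro b hb
        rw [hT, Finset.mem_filter] at hb
        exact hpos _ (hsum_ne s b fun h => hb.2 h.symm)
      refine ⟨min (d' / 2) d₀, lt_min (by linarith) hd₀pos, ?_⟩
      intro s' hne hcard
      by_cases hb : ∀ j ∈ s', j ≤ M
      · -- small case
        have hmem : s' ∈ T := by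
          rw [hT, Finset.mem_filter, Finset.mem_powerset]
          exact ⟨fun j hj => Finset.mem_range.mpr (Nat.lt_succ_of_le (hb j hj)), hne⟩
        exact le_trans (min_le_right _ _)
          (Finset.inf'_le (fun s' => N ((∑ j ∈ s, e j) + ∑ j ∈ s', e j)) hmem)
      · -- large case: the maximum of s' exceeds M
        push_neg at hb
        obtain ⟨j₀, hj₀, hj₀M⟩ := hb
        have hs' : s'.Nonempty := ⟨j₀, hj₀⟩
        set m := s'.max' hs' with hm
        have hMm : M < m := lt_of_lt_of_le hj₀M (s'.le_max' j₀ hj₀)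
        set t := s'.erase m with ht
        have h1 : (∑ j ∈ s', e j) = e m + ∑ j ∈ t, e j :=
          (Finset.add_sum_erase _ _ (s'.max'_mem hs')).symm
        have hA : (∑ j ∈ s, e j) + (∑ j ∈ s', e j)
            = e m + ((∑ j ∈ s, e j) + ∑ j ∈ t, e j) := by
          rw [h1]; abel
        have hgmem : ((∑ j ∈ s, e j) + ∑ j ∈ t, e j) ∈
            AddSubgroup.closure (e '' {j | j < m}) := by
          refine AddSubgroup.add_mem _ (hclos m s fun j hj => ?_) (hclos m t fun j hj => ?_)
          · exact lt_of_le_of_lt (s.le_max' j hj) hMm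
          · exact lt_of_le_of_ne (s'.le_max' j (Finset.mem_of_mem_erase hj))
              (Finset.ne_of_mem_erase hj)
        have h2 : N (e m) ≤ N ((∑ j ∈ s, e j) + ∑ j ∈ s', e j) := by
          rw [hA]; exact hmin m _ hgmem
        have h3 : N ((∑ j ∈ s, e j) + ∑ j ∈ t, e j)
            ≤ 2 * N ((∑ j ∈ s, e j) + ∑ j ∈ s', e j) := by
          have heq : (∑ j ∈ s, e j) + (∑ j ∈ t, e j)
              = ((∑ j ∈ s, e j) + ∑ j ∈ s', e j) + e m := by
            rw [hA, add_comm (e m) ((∑ j ∈ s, e j) + ∑ j ∈ t, e j), add_assoc,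
              hbool (e m), add_zero]
          calc N ((∑ j ∈ s, e j) + ∑ j ∈ t, e j)
              ≤ N ((∑ j ∈ s, e j) + ∑ j ∈ s', e j) + N (e m) := heq ▸ hNtri _ _
            _ ≤ 2 * N ((∑ j ∈ s, e j) + ∑ j ∈ s', e j) := by linarith
        have htcard : t.card ≤ k := by
          rw [ht, Finset.card_erase_of_mem (s'.max'_mem hs')]
          omega
        have htne : t ≠ s := by
          intro h
          have : t.card < s.card := lt_of_le_of_lt htcard (Nat.lt_of_succ_le hk)
          rw [h] at this
          exact lt_irrefl _ this
        have h4 := hIH t htne htcard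
        have := le_trans h4 h3
        calc min (d' / 2) d₀ ≤ d' / 2 := min_le_left _ _
          _ ≤ N ((∑ j ∈ s, e j) + ∑ j ∈ s', e j) := by linarith
  -- conclude
  intro n s hcard
  obtain ⟨d, hd, h⟩ := key n s hcard.ge
  refine ⟨d, hd, fun s' hc' hN => ?_⟩
  by_contra hne
  have heq : (∑ j ∈ s, e j) + (∑ j ∈ s', e j) ≠ 0 := hsum_ne s s' fun h => hne (by rw [h])
  exact absurd hN (not_lt.mpr (h s' (fun h => hne (by rw [h])) (by omega)))
end

section
/- Let X be a Tychonoff (completely regular Hausdorff) space with ind X = 0, i.e., whose clopen subsets form a base of the topology. Then there exists a topology τ on the free abelian group A(X) on X, realized as the group of finitely supported functions g : X → ℤ with pointwise addition, such that: (A(X), τ) is a Hausdorff topological group; τ has a base of neighborhoods of 0 consisting of open subgroups; the map sending x ∈ X to the indicator function δ_x of {x} is a homeomorphism of X onto a closed subspace of (A(X), τ); and for every n ∈ ℕ the set A_n(X) = {g : ∑_x |g(x)| ≤ n} of words of length at most n is closed in (A(X), τ). -/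
/-!
Topologize `X →₀ ℤ` by the homomorphism `g ↦ (V ↦ ∑_{x ∈ V} g x)` into `ℤ ^ Clopens X`, with `ℤ`
discrete. A topology induced by a homomorphism into a product of discrete groups is a group
topology with a base of open subgroups. Separating the support of `g` by pairwise disjoint clopen
sets `V_x ∋ x` gives the open neighbourhood `{h | ∀ x, ∑_{V_x} h = g x}` of `g` on which the length
is at least that of `g`; so the length is lower semicontinuous, each `A_n(X)` is closed,
`{0} = A_0(X)` is closed (hence the topology is Hausdorff), and `X` is the closed set of elements
of `A_1(X)` with coefficient sum `1`. Since the clopen sets form a base of `X`, the clopen sums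
recover the topology of `X`.
-/

open Topology TopologicalSpace Set

instance DiscreteTopology.nonarchimedeanAddGroup {G : Type*} [AddGroup G] [TopologicalSpace G]
    [DiscreteTopology G] : NonarchimedeanAddGroup G where
  is_nonarchimedean _ hU :=
    ⟨⟨⊥, isOpen_discrete _⟩, fun _ hx => AddSubgroup.mem_bot.1 hx ▸ mem_of_mem_nhds hU⟩

instance Pi.nonarchimedeanAddGroup {ι : Type*} {G : ι → Type*} [∀ i, AddGroup (G i)]
    [∀ i, TopologicalSpace (G i)] [∀ i, NonarchimedeanAddGroup (G i)] :
    NonarchimedeanAddGroup (∀ i, G i) where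
  is_nonarchimedean U hU := by
    rw [nhds_pi, Filter.mem_pi] at hU
    obtain ⟨I, hI, s, hs, hsU⟩ := hU
    choose V hV using fun i => NonarchimedeanAddGroup.is_nonarchimedean (s i) (hs i)
    exact ⟨⟨AddSubgroup.pi I fun i => (V i).toAddSubgroup,
      isOpen_set_pi hI fun i _ => (V i).isOpen⟩, fun f hf => hsU fun i hi => hV i (hf i hi)⟩

theorem Topology.IsInducing.nonarchimedeanAddGroup {G H : Type*} [AddGroup G]
    [TopologicalSpace G] [AddGroup H] [TopologicalSpace H] [NonarchimedeanAddGroup H]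
    {f : G →+ H} (hf : IsInducing f) : NonarchimedeanAddGroup G where
  toIsTopologicalAddGroup := hf.topologicalAddGroup f
  is_nonarchimedean U hU := by
    rw [hf.nhds_eq_comap, map_zero] at hU
    obtain ⟨W, hW, hWU⟩ := hU
    obtain ⟨K, hK⟩ := NonarchimedeanAddGroup.is_nonarchimedean W hW
    exact ⟨K.comap f hf.continuous, fun x hx => hWU (hK hx)⟩

namespace FreeAbelian

variable {X : Type*}

def length (g : X →₀ ℤ) : ℕ := g.sum fun _ n => n.natAbs

theorem length_eq_zero {g : X →₀ ℤ} : length g = 0 ↔ g = 0 := by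
  simp [length, Finsupp.sum, Finsupp.ext_iff]

theorem card_support_le_length (g : X →₀ ℤ) : g.support.card ≤ length g := by
  simpa [length, Finsupp.sum] using
    g.support.card_nsmul_le_sum (fun x => (g x).natAbs) 1 fun x hx =>
      Int.natAbs_pos.2 (Finsupp.mem_support_iff.1 hx)

noncomputable def mass (V : Set X) : (X →₀ ℤ) →+ ℤ :=
  (Finsupp.linearCombination ℤ (V.indicator 1)).toAddMonoidHom

theorem mass_apply (V : Set X) [DecidablePred (· ∈ V)] (g : X →₀ ℤ) :
    mass V g = ∑ x ∈ g.support with x ∈ V, g x := by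
  simp [mass, Finsupp.linearCombination_apply, Finsupp.sum, Finset.sum_filter, Set.indicator_apply]

@[simp]
theorem mass_single (V : Set X) (x : X) (n : ℤ) :
    mass V (Finsupp.single x n) = V.indicator (fun _ => n) x := by
  by_cases hx : x ∈ V <;> simp [mass, hx]

theorem mass_eq_apply {V : X → Set X} {g : X →₀ ℤ} (hV : ∀ x ∈ g.support, x ∈ V x)
    (hd : (g.support : Set X).PairwiseDisjoint V) {x : X} (hx : x ∈ g.support) :
    mass (V x) g = g x := by
  classical
  rw [mass_apply]
  refine Finset.sum_eq_single_of_mem x (Finset.mem_filter.2 ⟨hx, hV x hx⟩) fun y hy hyx => ?_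
  rw [Finset.mem_filter] at hy
  exact absurd (hd hy.1 hx hyx) (Set.not_disjoint_iff.2 ⟨y, hV y hy.1, hy.2⟩)

theorem sum_natAbs_mass_le_length {s : Finset X} {V : X → Set X}
    (hd : (s : Set X).PairwiseDisjoint V) (h : X →₀ ℤ) :
    ∑ x ∈ s, (mass (V x) h).natAbs ≤ length h := by
  classical
  calc ∑ x ∈ s, (mass (V x) h).natAbs
      ≤ ∑ x ∈ s, ∑ y ∈ h.support with y ∈ V x, (h y).natAbs :=
        Finset.sum_le_sum fun x _ => mass_apply (V x) h ▸ Int.natAbs_sum_le _ _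
    _ = ∑ y ∈ s.biUnion fun x => {y ∈ h.support | y ∈ V x}, (h y).natAbs :=
        (Finset.sum_biUnion fun x hx y hy hxy =>
          Finset.disjoint_filter_filter' (p := (· ∈ V x)) (q := (· ∈ V y)) _ _
            (hd hx hy hxy)).symm
    _ ≤ length h :=
        Finset.sum_le_sum_of_subset (Finset.biUnion_subset.2 fun _ _ => Finset.filter_subset _ _)

theorem range_single_one :
    range (fun x : X => Finsupp.single x (1 : ℤ)) = {g | length g ≤ 1 ∧ mass univ g = 1} := by
  refine Subset.antisymm (range_subset_iff.2 fun x => by simp [length]) fun g ⟨hl, hm⟩ => ?_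
  have hne : g ≠ 0 := by rintro rfl; simp at hm
  obtain ⟨x, hx⟩ := Finsupp.support_nonempty_iff.2 hne
  have hsupp : g.support ⊆ {x} := fun y hy => Finset.mem_singleton.2
    (Finset.card_le_one.1 ((card_support_le_length g).trans hl) y hy x hx)
  rw [Finsupp.support_subset_singleton.1 hsupp] at hm ⊢
  exact ⟨x, by simp_all⟩

section Topology

variable [TopologicalSpace X]

theorem exists_isClopen_pairwiseDisjoint [T1Space X]
    (hB : IsTopologicalBasis {s : Set X | IsClopen s}) (s : Finset X) : ∃ V : X → Set X,
      (∀ x, IsClopen (V x)) ∧ (∀ x ∈ s, x ∈ V x) ∧ (s : Set X).PairwiseDisjoint V := by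
  classical
  choose W hW hxW hWs using fun x => hB.exists_subset_of_mem_open (a := x)
    (u := ((s.erase x : Finset X) : Set X)ᶜ) (by simp)
    (s.erase x).finite_toSet.isClosed.isOpen_compl
  have hW' : ∀ x y, x ∈ s → x ≠ y → x ∉ W y := fun x y hx hxy hxW =>
    hWs y hxW (Finset.mem_erase.2 ⟨hxy, hx⟩)
  refine ⟨fun x => W x \ ⋃ y ∈ s.erase x, W y,
    fun x => (hW x).diff (isClopen_biUnion_finset fun y _ => hW y), fun x hx => ⟨hxW x, ?_⟩, ?_⟩
  · simpa using fun y hyx _ => hW' x y hx (Ne.symm hyx)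
  · intro x hx y hy hxy
    refine Set.disjoint_left.2 fun z hzx hzy => hzx.2 ?_
    exact Set.mem_biUnion (Finset.mem_erase.2 ⟨Ne.symm hxy, hy⟩) hzy.1

variable (X) in
noncomputable def clopenMasses : (X →₀ ℤ) →+ (Clopens X → ℤ) :=
  AddMonoidHom.pi fun V => mass (V : Set X)

variable [TopologicalSpace (X →₀ ℤ)]

theorem continuous_mass (hΦ : Continuous (clopenMasses X)) {V : Set X} (hV : IsClopen V) :
    Continuous (mass V) :=
  (continuous_apply (⟨V, hV⟩ : Clopens X)).comp hΦ

theorem lowerSemicontinuous_length [T1Space X]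
    (hB : IsTopologicalBasis {s : Set X | IsClopen s}) (hΦ : Continuous (clopenMasses X)) :
    LowerSemicontinuous (length : (X →₀ ℤ) → ℕ) := by
  intro g n hn
  obtain ⟨V, hVc, hV, hd⟩ := exists_isClopen_pairwiseDisjoint hB g.support
  have hnhds : {h | ∀ x ∈ g.support, mass (V x) h = g x} ∈ 𝓝 g := by
    simp only [ofPred_forall]
    refine (isOpen_biInter_finset fun x _ => ?_).mem_nhds
      (by simpa using fun x hx => mass_eq_apply hV hd hx)
    exact (isOpen_discrete {g x}).preimage (continuous_mass hΦ (hVc x))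
  filter_upwards [hnhds] with h hh
  calc n < length g := hn
    _ = ∑ x ∈ g.support, (mass (V x) h).natAbs :=
      Finset.sum_congr rfl fun x hx => by rw [hh x hx]
    _ ≤ length h := sum_natAbs_mass_le_length hd h

theorem isClosedEmbedding_single_one [T1Space X]
    (hB : IsTopologicalBasis {s : Set X | IsClopen s}) (hΦ : IsInducing (clopenMasses X)) :
    IsClosedEmbedding fun x : X => Finsupp.single x (1 : ℤ) := by
  have hcont : Continuous fun x : X => Finsupp.single x (1 : ℤ) :=
    hΦ.continuous_iff.2 <| continuous_pi fun V => by
      simpa [clopenMasses] using V.isClopen.continuous_indicator continuous_const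
  have hind : induced (fun x : X => Finsupp.single x (1 : ℤ)) ‹TopologicalSpace (X →₀ ℤ)› ≤
      ‹TopologicalSpace X› := by
    refine le_trans (le_generateFrom fun V hV =>
      ⟨_, (isOpen_discrete {1}).preimage (continuous_mass hΦ.continuous hV), ?_⟩)
      hB.eq_generateFrom.ge
    ext x
    by_cases hx : x ∈ V <;> simp [hx]
  refine ⟨⟨⟨le_antisymm (continuous_iff_le_induced.1 hcont) hind⟩,
    Finsupp.single_left_injective one_ne_zero⟩, ?_⟩
  rw [range_single_one, ofPred_and]
  exact ((lowerSemicontinuous_length hB hΦ.continuous).isClosed_preimage 1).inter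
    ((isClosed_discrete {1}).preimage (continuous_mass hΦ.continuous isClopen_univ))

end Topology

end FreeAbelian

/-- For every Tychonoff space `X` with `ind X = 0` (the clopen sets form a base)
there is a Hausdorff group topology on the free abelian group on `X`, realized
as the finitely supported functions `X →₀ ℤ`, with a base of neighborhoods of
`0` consisting of open subgroups, in which `X` (embedded via `x ↦ δ_x`) is a
closed subspace and each set of words of length at most `n` is closed. -/
theorem stmt18 {X : Type*} [TopologicalSpace X] [T35Space X]
    (hzd : ∀ (x : X) (U : Set X), IsOpen U → x ∈ U →
      ∃ V : Set X, IsClopen V ∧ x ∈ V ∧ V ⊆ U) :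
    ∃ τ : TopologicalSpace (X →₀ ℤ),
      @IsTopologicalAddGroup (X →₀ ℤ) τ _ ∧
      @T2Space (X →₀ ℤ) τ ∧
      (∀ U : Set (X →₀ ℤ), U ∈ @nhds _ τ 0 →
        ∃ H : AddSubgroup (X →₀ ℤ), τ.IsOpen (H : Set (X →₀ ℤ)) ∧
          (H : Set (X →₀ ℤ)) ⊆ U) ∧
      @Topology.IsClosedEmbedding X (X →₀ ℤ) _ τ (fun x => Finsupp.single x 1) ∧
      (∀ n : ℕ, @IsClosed _ τ
        {g : X →₀ ℤ | (g.support.sum fun x => (g x).natAbs) ≤ n}) := by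
  open FreeAbelian in
  have hB : IsTopologicalBasis {s : Set X | IsClopen s} :=
    isTopologicalBasis_of_isOpen_of_nhds (fun _ hV => hV.isOpen) fun x U hx hU => hzd x U hU hx
  let τ : TopologicalSpace (X →₀ ℤ) := .induced (clopenMasses X) inferInstance
  have hΦ : IsInducing (clopenMasses X) := ⟨rfl⟩
  have := hΦ.nonarchimedeanAddGroup
  have hlength := lowerSemicontinuous_length hB hΦ.continuous
  have hT2 : T2Space (X →₀ ℤ) := by
    rw [IsTopologicalAddGroup.t2Space_iff_zero_closed]
    convert hlength.isClosed_preimage 0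
    ext g
    simp [length_eq_zero]
  refine ⟨τ, inferInstance, hT2, fun U hU => ?_, isClosedEmbedding_single_one hB hΦ,
    hlength.isClosed_preimage⟩
  obtain ⟨H, hH⟩ := NonarchimedeanAddGroup.is_nonarchimedean U hU
  exact ⟨H, H.isOpen, hH⟩
end

section
/- Let X be a Tychonoff (completely regular Hausdorff) space with ind X = 0, i.e., whose clopen subsets form a base of the topology. Then there exists a topology τ on the free Boolean group B(X) on X, realized as the group of finitely supported functions g : X → ℤ/2 with pointwise addition, such that: (B(X), τ) is a Hausdorff topological group; τ has a base of neighborhoods of 0 consisting of open subgroups; the map sending x ∈ X to the indicator function δ_x of {x} is a homeomorphism of X onto a closed subspace of (B(X), τ); and for every n ∈ ℕ the set B_n(X) = {g : |supp(g)| ≤ n} of words of length at most n is closed in (B(X), τ). -/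
/-!
The topology is induced by the homomorphism `g ↦ (∑_{x ∈ U} g x)_U` into the product of discrete
copies of `ZMod 2` indexed by the clopen sets `U` of `X`; kernels of finitely many coordinates are
open subgroups. The points of a finite set are separated by pairwise disjoint clopen sets, so a
word with `n` letters has a neighbourhood consisting of words with at least `n` letters: the length
is lower semicontinuous, which gives both injectivity of the homomorphism and closedness of
`B_n(X)`. The coordinates of `δ_x` are the indicators of the clopen sets, which embed `X` because
the clopen sets form a base, and the image `B_1(X) ∩ {g | ∑ₓ g x = 1}` of `X` is closed.
-/

open Finset Filter Topology TopologicalSpace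

lemma Pi.exists_isOpen_addSubgroup_subset_of_mem_nhds_zero {ι : Type*} {G : ι → Type*}
    [∀ i, AddGroup (G i)] [∀ i, TopologicalSpace (G i)] [∀ i, DiscreteTopology (G i)]
    {W : Set (∀ i, G i)} (hW : W ∈ 𝓝 0) :
    ∃ H : AddSubgroup (∀ i, G i), IsOpen (H : Set (∀ i, G i)) ∧ (H : Set (∀ i, G i)) ⊆ W := by
  rw [nhds_pi, Filter.mem_pi] at hW
  obtain ⟨I, hI, t, ht, htW⟩ := hW
  refine ⟨AddSubgroup.pi I fun _ => ⊥, ?_, ?_⟩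
  · rw [AddSubgroup.coe_pi]
    exact isOpen_set_pi hI fun _ _ => isOpen_discrete _
  · rw [AddSubgroup.coe_pi]
    exact (Set.pi_mono fun i _ => by simpa using mem_of_mem_nhds (ht i)).trans htW

lemma Finsupp.range_single_one_eq {X R : Type*} [Semiring R] [Nontrivial R] :
    Set.range (fun x => Finsupp.single x (1 : R)) =
      {g : X →₀ R | #g.support ≤ 1} ∩ {g | (g.sum fun _ c => c) = 1} := by
  ext g
  constructor
  · rintro ⟨x, rfl⟩
    simp
  · rintro ⟨hcard, hsum⟩
    obtain hg | hg := Nat.le_one_iff_eq_zero_or_eq_one.1 hcard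
    · simp_all
    · obtain ⟨x, c, -, rfl⟩ := Finsupp.card_support_eq_one'.1 hg
      exact ⟨x, by simp_all⟩

section ClopenSum

variable {X : Type*} [TopologicalSpace X]

lemma exists_pairwiseDisjoint_clopen_inter_eq_singleton [T1Space X]
    (hX : IsTopologicalBasis {s : Set X | IsClopen s}) (s : Finset X) :
    ∃ W : X → Set X, (∀ x, IsClopen (W x)) ∧ (∀ x ∈ s, ↑s ∩ W x = {x}) ∧
      (s : Set X).PairwiseDisjoint W := by
  classical
  have hV : ∀ x : X, ∃ V : Set X, IsClopen V ∧ x ∈ V ∧ V ⊆ (↑(s.erase x))ᶜ := fun x =>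
    hX.exists_subset_of_mem_open (by simp) (s.erase x).finite_toSet.isClosed.isOpen_compl
  choose V hVc hxV hVs using hV
  refine ⟨fun x => V x \ ⋃ y ∈ s.erase x, V y,
    fun x => (hVc x).diff (isClopen_biUnion_finset fun y _ => hVc y), ?_, ?_⟩
  · intro x hx
    refine Set.eq_singleton_iff_unique_mem.2 ⟨⟨hx, hxV x, ?_⟩, ?_⟩
    · simp only [Set.mem_iUnion, not_exists]
      exact fun y hy hxy => hVs y hxy (by simp [hx, (Finset.ne_of_mem_erase hy).symm])
    · rintro y ⟨hy, hyV, -⟩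
      by_contra hyx
      exact hVs x hyV (by simp [hy, hyx])
  · intro x hx y hy hxy
    exact Set.disjoint_left.2 fun z hzx hzy =>
      hzx.2 (Set.mem_biUnion (Finset.mem_erase.2 ⟨hxy.symm, hy⟩) hzy.1)

section Indicator

variable (R : Type*) [Zero R] [One R]

noncomputable def clopenIndicator (x : X) : {U : Set X // IsClopen U} → R :=
  fun U => U.1.indicator 1 x

variable {R} [TopologicalSpace R]

lemma continuous_clopenIndicator : Continuous (clopenIndicator R : X → _) :=
  continuous_pi fun U => U.2.continuous_indicator continuous_const

lemma isInducing_clopenIndicator [DiscreteTopology R] [NeZero (1 : R)]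
    (hX : IsTopologicalBasis {s : Set X | IsClopen s}) :
    IsInducing (clopenIndicator R : X → _) := by
  refine isInducing_iff_nhds.2 fun x => le_antisymm
    (continuous_clopenIndicator.tendsto x).le_comap fun s hs => ?_
  obtain ⟨V, hV, hxV, hVs⟩ := hX.mem_nhds_iff.1 hs
  have hopen : IsOpen {φ : {U : Set X // IsClopen U} → R | φ ⟨V, hV⟩ = 1} :=
    (continuous_apply _).isOpen_preimage _ (isOpen_discrete {1})
  refine mem_comap.2 ⟨_, hopen.mem_nhds (Set.indicator_of_mem hxV 1), fun y hy => hVs ?_⟩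
  by_contra hyV
  exact zero_ne_one ((Set.indicator_of_notMem hyV 1).symm.trans hy)

end Indicator

section Semiring

variable (R : Type*) [Semiring R]

noncomputable def clopenSum : (X →₀ R) →ₗ[R] ({U : Set X // IsClopen U} → R) :=
  Finsupp.linearCombination R (clopenIndicator R)

variable {R}

lemma clopenSum_apply (g : X →₀ R) (U : {U : Set X // IsClopen U}) :
    clopenSum R g U = ∑ x ∈ g.support, U.1.indicator g x := by
  simp only [clopenSum, Finsupp.linearCombination_apply, Finsupp.sum, Finset.sum_apply,
    Pi.smul_apply, smul_eq_mul, clopenIndicator]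
  refine Finset.sum_congr rfl fun x _ => ?_
  by_cases hx : x ∈ U.1 <;> simp [hx]

lemma clopenSum_single_one (x : X) : clopenSum R (Finsupp.single x 1) = clopenIndicator R x := by
  simp [clopenSum]

lemma clopenSum_univ (g : X →₀ R) :
    clopenSum R g ⟨Set.univ, isClopen_univ⟩ = g.sum fun _ c => c := by
  simp [clopenSum_apply, Finsupp.sum]

end Semiring

section Topology

variable {R : Type*} [Ring R] [TopologicalSpace R] [DiscreteTopology R]

lemma eventually_card_support_le [T1Space X] (hX : IsTopologicalBasis {s : Set X | IsClopen s})
    (g : X →₀ R) :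
    ∀ᶠ φ in 𝓝 (clopenSum R g), ∀ h : X →₀ R, clopenSum R h = φ → #g.support ≤ #h.support := by
  obtain ⟨W, hWc, hgW, hWd⟩ := exists_pairwiseDisjoint_clopen_inter_eq_singleton hX g.support
  let W' (x : X) : {U : Set X // IsClopen U} := ⟨W x, hWc x⟩
  have hsum_W : ∀ x ∈ g.support, clopenSum R g (W' x) = g x := by
    intro x hx
    have hxW : x ∈ W x := ((Set.ext_iff.1 (hgW x hx) x).2 rfl).2
    rw [clopenSum_apply, Finset.sum_eq_single_of_mem x hx fun y hy hyx => ?_,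
      Set.indicator_of_mem hxW]
    exact Set.indicator_of_notMem (fun hyW => hyx ((Set.ext_iff.1 (hgW x hx) y).1 ⟨hy, hyW⟩)) _
  have hnear : ∀ᶠ φ in 𝓝 (clopenSum R g), ∀ x ∈ g.support, φ (W' x) = clopenSum R g (W' x) :=
    (eventually_all_finset _).2 fun x _ =>
      (continuous_apply _).continuousAt (isOpen_discrete {_} |>.mem_nhds rfl)
  filter_upwards [hnear] with φ hφ h rfl
  refine card_le_card_of_forall_subsingleton (fun x z => z ∈ W x) (fun x hx => ?_)
    fun z _ x ⟨hx, hzx⟩ y ⟨hy, hzy⟩ => ?_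
  · by_contra! hdisj
    refine Finsupp.mem_support_iff.1 hx ?_
    rw [← hsum_W x hx, ← hφ x hx, clopenSum_apply]
    exact Finset.sum_eq_zero fun z hz => Set.indicator_of_notMem (hdisj z hz) _
  · by_contra hxy
    exact Set.disjoint_left.1 (hWd hx hy hxy) hzx hzy

lemma clopenSum_injective [T1Space X] (hX : IsTopologicalBasis {s : Set X | IsClopen s}) :
    Function.Injective (clopenSum R : (X →₀ R) → _) := by
  refine (injective_iff_map_eq_zero (clopenSum R)).2 fun g hg => ?_
  simpa using (eventually_card_support_le hX g).self_of_nhds 0 (by simp [hg])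

end Topology

noncomputable abbrev clopenTopology {R : Type*} [Semiring R] [TopologicalSpace R] :
    TopologicalSpace (X →₀ R) :=
  induced (clopenSum R) inferInstance

namespace clopenTopology

variable {R : Type*} [TopologicalSpace R]

attribute [local instance] clopenTopology

lemma isInducing_clopenSum [Semiring R] : IsInducing (clopenSum R : (X →₀ R) → _) := ⟨rfl⟩

instance isTopologicalAddGroup [Ring R] [IsTopologicalAddGroup R] :
    IsTopologicalAddGroup (X →₀ R) :=
  topologicalAddGroup_induced (clopenSum R)

variable [Ring R] [DiscreteTopology R]

lemma exists_isOpen_addSubgroup_subset {U : Set (X →₀ R)} (hU : U ∈ 𝓝 0) :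
    ∃ H : AddSubgroup (X →₀ R), IsOpen (H : Set (X →₀ R)) ∧ (H : Set (X →₀ R)) ⊆ U := by
  rw [isInducing_clopenSum.nhds_eq_comap, map_zero] at hU
  obtain ⟨W, hW, hWU⟩ := mem_comap.1 hU
  obtain ⟨H, hHo, hHW⟩ := Pi.exists_isOpen_addSubgroup_subset_of_mem_nhds_zero hW
  exact ⟨H.comap (clopenSum R).toAddMonoidHom,
    isInducing_clopenSum.continuous.isOpen_preimage _ hHo, (Set.preimage_mono hHW).trans hWU⟩

variable [T1Space X] (hX : IsTopologicalBasis {s : Set X | IsClopen s})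
include hX

lemma t2Space : T2Space (X →₀ R) :=
  (IsEmbedding.mk isInducing_clopenSum (clopenSum_injective hX)).t2Space

lemma lowerSemicontinuous_card_support :
    LowerSemicontinuous fun g : X →₀ R => #g.support := fun g n hn => by
  rw [isInducing_clopenSum.nhds_eq_comap, eventually_comap]
  exact (eventually_card_support_le hX g).mono fun φ hφ h hh => hn.trans_le (hφ h hh)

lemma isClosed_setOf_card_support_le (n : ℕ) : IsClosed {g : X →₀ R | #g.support ≤ n} :=
  (lowerSemicontinuous_card_support hX).isClosed_preimage n

lemma isClosedEmbedding_single_one [Nontrivial R] :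
    IsClosedEmbedding fun x : X => Finsupp.single x (1 : R) := by
  have hcomp : clopenSum R ∘ (fun x : X => Finsupp.single x (1 : R)) = clopenIndicator R :=
    funext clopenSum_single_one
  refine ⟨⟨isInducing_clopenSum.of_comp_iff.1 (hcomp ▸ isInducing_clopenIndicator hX),
    Finsupp.single_left_injective one_ne_zero⟩, ?_⟩
  rw [Finsupp.range_single_one_eq]
  refine (isClosed_setOf_card_support_le hX 1).inter ?_
  simp_rw [← clopenSum_univ]
  exact (isClosed_discrete {1}).preimage ((continuous_apply _).comp isInducing_clopenSum.continuous)

end clopenTopology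

end ClopenSum

/-- For every Tychonoff space `X` with `ind X = 0` (the clopen sets form a base)
there is a Hausdorff group topology on the free Boolean group on `X`, realized
as the finitely supported functions `X →₀ ZMod 2`, with a base of neighborhoods
of `0` consisting of open subgroups, in which `X` (embedded via `x ↦ δ_x`) is a
closed subspace and each set of words of length at most `n` is closed. -/
theorem stmt19 {X : Type*} [TopologicalSpace X] [T35Space X]
    (hzd : ∀ (x : X) (U : Set X), IsOpen U → x ∈ U →
      ∃ V : Set X, IsClopen V ∧ x ∈ V ∧ V ⊆ U) :
    ∃ τ : TopologicalSpace (X →₀ ZMod 2),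
      @IsTopologicalAddGroup (X →₀ ZMod 2) τ _ ∧
      @T2Space (X →₀ ZMod 2) τ ∧
      (∀ U : Set (X →₀ ZMod 2), U ∈ @nhds _ τ 0 →
        ∃ H : AddSubgroup (X →₀ ZMod 2), τ.IsOpen (H : Set (X →₀ ZMod 2)) ∧
          (H : Set (X →₀ ZMod 2)) ⊆ U) ∧
      @Topology.IsClosedEmbedding X (X →₀ ZMod 2) _ τ (fun x => Finsupp.single x 1) ∧
      (∀ n : ℕ, @IsClosed _ τ {g : X →₀ ZMod 2 | g.support.card ≤ n}) := by
  have hX : IsTopologicalBasis {s : Set X | IsClopen s} :=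
    isTopologicalBasis_of_isOpen_of_nhds (fun _ h => h.isOpen) fun x U hx hU => hzd x U hU hx
  exact ⟨clopenTopology, clopenTopology.isTopologicalAddGroup, clopenTopology.t2Space hX,
    fun _ => clopenTopology.exists_isOpen_addSubgroup_subset,
    clopenTopology.isClosedEmbedding_single_one hX,
    clopenTopology.isClosed_setOf_card_support_le hX⟩
end
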